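/- arXiv:0803.4279 — 8 statements merged into one kernel-verified Lean document; each statement's English description precedes it below -/
import Mathlib

section
/- Let A be a unital associative ℂ-algebra, φ, ψ : A → ℂ unital linear functionals, and let A₁, …, A_d be unital subalgebras of A that are conditionally free with respect to (φ, ψ). Then for every n ≥ 2, every sequence of indices u(1) ≠ u(2), u(2) ≠ u(3), …, u(n−1) ≠ u(n) in {1, …, d}, and every X₁, …, Xₙ ∈ A with Xᵢ ∈ A_{u(i)} for all i and ψ(Xᵢ) = 0 for all 2 ≤ i ≤ n−1 (no assumption on ψ(X₁) or ψ(Xₙ)), one has φ(X₁X₂⋯Xₙ) = φ(X₁)φ(X₂)⋯φ(Xₙ). -/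
/-!
Write an endpoint letter as `x = x° + ψ(x) • 1` with `ψ(x°) = 0`. Since `φ` is linear and
`φ 1 = 1`, `φ(a x) = φ(a x°) + ψ(x) φ(a)`, so the factorization for the word ending in `x`
follows from the factorizations for the word ending in the centered letter `x°` and for the
shorter word `a`. Centering first the last letter and then the first one reduces the theorem
to the defining property of c-freeness.
-/

/-- Unital subalgebras `S i` of `A` are conditionally free (c-free) with respect to
`(φ, ψ)`: for every `n ≥ 2`, indices `u 0 ≠ u 1, …, u (n-2) ≠ u (n-1)`, and elements
`X 0, …, X (n-1)` with `X i ∈ S (u i)` and `ψ (X i) = 0` for all `i < n`, one has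
`φ (X 0 ⋯ X (n-1)) = φ (X 0) ⋯ φ (X (n-1))`. -/
def CondFree {A : Type*} [Ring A] [Algebra ℂ A] (φ ψ : A →ₗ[ℂ] ℂ)
    {ι : Type*} (S : ι → Subalgebra ℂ A) : Prop :=
  ∀ (n : ℕ), 2 ≤ n → ∀ (u : ℕ → ι) (X : ℕ → A),
    (∀ i, i + 1 < n → u i ≠ u (i + 1)) →
    (∀ i, i < n → X i ∈ S (u i)) →
    (∀ i, i < n → ψ (X i) = 0) →
    φ (((List.range n).map X).prod) = ((List.range n).map fun i => φ (X i)).prod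

open Function

section

variable {A : Type*} [Ring A] [Algebra ℂ A] {φ ψ : A →ₗ[ℂ] ℂ}

lemma map_sub_smul_one_self (hψ1 : ψ 1 = 1) (x : A) : ψ (x - ψ x • 1) = 0 := by
  simp [hψ1]

lemma map_mul_eq_mul_of_map_mul_sub_smul_one (hφ1 : φ 1 = 1) {a x : A} {p : ℂ}
    (ha : φ a = p) (hax : φ (a * (x - ψ x • 1)) = p * φ (x - ψ x • 1)) :
    φ (a * x) = p * φ x := by
  calc φ (a * x) = φ (a * (x - ψ x • 1)) + ψ x * φ a := by simp [mul_sub]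
    _ = p * φ x := by rw [hax, ha, map_sub, map_smul, hφ1]; ring

lemma map_mul_eq_mul_of_map_sub_smul_one_mul (hφ1 : φ 1 = 1) {x b : A} {p : ℂ}
    (hb : φ b = p) (hxb : φ ((x - ψ x • 1) * b) = φ (x - ψ x • 1) * p) :
    φ (x * b) = φ x * p := by
  calc φ (x * b) = φ ((x - ψ x • 1) * b) + ψ x * φ b := by simp [sub_mul]
    _ = φ x * p := by rw [hxb, hb, map_sub, map_smul, hφ1]; ring

variable {ι : Type*} {S : ι → Subalgebra ℂ A}

lemma update_sub_smul_one_mem {n j : ℕ} {u : ℕ → ι} {X : ℕ → A}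
    (hX : ∀ i, i < n → X i ∈ S (u i)) :
    ∀ i, i < n → update X j (X j - ψ (X j) • 1) i ∈ S (u i) := by
  intro i hi
  rcases eq_or_ne i j with rfl | hij
  · rw [update_self]
    exact sub_mem (hX i hi) ((S (u i)).smul_mem (S (u i)).one_mem _)
  · rw [update_of_ne hij]
    exact hX i hi

lemma map_update_sub_smul_one_eq_zero (hψ1 : ψ 1 = 1) {j i : ℕ} {X : ℕ → A}
    (hi : i ≠ j → ψ (X i) = 0) : ψ (update X j (X j - ψ (X j) • 1) i) = 0 := by
  rcases eq_or_ne i j with rfl | hij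
  · rw [update_self, map_sub_smul_one_self hψ1]
  · rw [update_of_ne hij, hi hij]

namespace CondFree

lemma map_prod_of_centered (hfree : CondFree φ ψ S) (hφ1 : φ 1 = 1) (n : ℕ) (u : ℕ → ι) (X : ℕ → A)
    (hu : ∀ i, i + 1 < n → u i ≠ u (i + 1)) (hX : ∀ i, i < n → X i ∈ S (u i))
    (hcent : ∀ i, i < n → ψ (X i) = 0) :
    φ (((List.range n).map X).prod) = ((List.range n).map fun i => φ (X i)).prod := by
  match n with
  | 0 => simpa using hφ1
  | 1 => simp
  | m + 2 => exact hfree (m + 2) (by omega) u X hu hX hcent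

lemma map_prod_of_centered_of_lt_pred (hfree : CondFree φ ψ S) (hφ1 : φ 1 = 1)
    (hψ1 : ψ 1 = 1) (n : ℕ) (u : ℕ → ι) (X : ℕ → A)
    (hu : ∀ i, i + 1 < n → u i ≠ u (i + 1)) (hX : ∀ i, i < n → X i ∈ S (u i))
    (hcent : ∀ i, i + 1 < n → ψ (X i) = 0) :
    φ (((List.range n).map X).prod) = ((List.range n).map fun i => φ (X i)).prod := by
  rcases n with _ | m
  · simpa using hφ1
  have hYX : ∀ i ∈ List.range m, update X m (X m - ψ (X m) • 1) i = X i := fun i hi =>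
    update_of_ne (List.mem_range.mp hi).ne _ _
  have hY := hfree.map_prod_of_centered hφ1 (m + 1) u _ hu (update_sub_smul_one_mem hX)
    fun i hi => map_update_sub_smul_one_eq_zero (j := m) hψ1 fun hne => hcent i (by omega)
  rw [List.prod_range_succ, List.prod_range_succ, List.map_congr_left hYX,
    List.map_congr_left fun i hi => congrArg φ (hYX i hi), update_self] at hY
  rw [List.prod_range_succ, List.prod_range_succ]
  refine map_mul_eq_mul_of_map_mul_sub_smul_one hφ1 ?_ hY
  exact hfree.map_prod_of_centered hφ1 m u X (fun i hi => hu i (by omega))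
    (fun i hi => hX i (by omega)) fun i hi => hcent i (by omega)

end CondFree

end

theorem condFree_factorization_without_endpoint_assumptions_general
    {A : Type*} [Ring A] [Algebra ℂ A] (φ ψ : A →ₗ[ℂ] ℂ)
    (hφ1 : φ 1 = 1) (hψ1 : ψ 1 = 1)
    {d : ℕ} (S : Fin d → Subalgebra ℂ A) (hfree : CondFree φ ψ S)
    (n : ℕ) (u : ℕ → Fin d) (X : ℕ → A)
    (hu : ∀ i, i + 1 < n → u i ≠ u (i + 1))
    (hX : ∀ i, i < n → X i ∈ S (u i))
    (hcent : ∀ i, 0 < i → i + 1 < n → ψ (X i) = 0) :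
    φ (((List.range n).map X).prod) = ((List.range n).map fun i => φ (X i)).prod := by
  rcases n with _ | k
  · simpa using hφ1
  have hY := hfree.map_prod_of_centered_of_lt_pred hφ1 hψ1 (k + 1) u
    (update X 0 (X 0 - ψ (X 0) • 1)) hu (update_sub_smul_one_mem hX)
    fun i hi => map_update_sub_smul_one_eq_zero hψ1 fun hne => hcent i (by omega) hi
  simp only [List.prod_range_succ', update_self, ne_eq, Nat.succ_ne_zero, not_false_eq_true,
    update_of_ne] at hY
  rw [List.prod_range_succ', List.prod_range_succ']
  refine map_mul_eq_mul_of_map_sub_smul_one_mul hφ1 ?_ hY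
  exact hfree.map_prod_of_centered_of_lt_pred hφ1 hψ1 k (fun i => u (i + 1))
    (fun i => X (i + 1)) (fun i hi => hu (i + 1) (by omega)) (fun i hi => hX (i + 1) (by omega))
    fun i hi => hcent (i + 1) (by omega) (by omega)

/-- if the subalgebras `S i` are conditionally free with respect to
`(φ, ψ)`, then the factorization `φ(X₁⋯Xₙ) = φ(X₁)⋯φ(Xₙ)` for alternating words of
`ψ`-centered elements remains valid without any centeredness assumption on the two
endpoint elements. -/
theorem condFree_factorization_without_endpoint_assumptions
    {A : Type*} [Ring A] [Algebra ℂ A] (φ ψ : A →ₗ[ℂ] ℂ)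
    (hφ1 : φ 1 = 1) (hψ1 : ψ 1 = 1)
    {d : ℕ} (S : Fin d → Subalgebra ℂ A) (hfree : CondFree φ ψ S)
    (n : ℕ) (hn : 2 ≤ n) (u : ℕ → Fin d) (X : ℕ → A)
    (hu : ∀ i, i + 1 < n → u i ≠ u (i + 1))
    (hX : ∀ i, i < n → X i ∈ S (u i))
    (hcent : ∀ i, 0 < i → i + 1 < n → ψ (X i) = 0) :
    φ (((List.range n).map X).prod) = ((List.range n).map fun i => φ (X i)).prod :=
  condFree_factorization_without_endpoint_assumptions_general φ ψ hφ1 hψ1 S hfree n u X hu hX hcent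
end

section
/- Let ψ be a unital linear functional on ℂ⟨x₁, x₂, …⟩. Then there exists a unique sequence of elements A₀, A₁, A₂, … of ℂ⟨x₁, x₂, …⟩ such that A₀ = 1 and, for every k ≥ 1: ψ(Aₖ) = 0, and for every i ≥ 1, (id ⊗ ψ)(∂ᵢ Aₖ) = A_{k−1} if i = k and (id ⊗ ψ)(∂ᵢ Aₖ) = 0 if i ≠ k. (These are the free Appell polynomials A^ψ(x₁, …, xₖ) of ψ.) -/
/-!
Write `Dᵢ = (id ⊗ ψ) ∘ ∂ᵢ` and `L_φ = (id ⊗ φ) ∘ Δ` for the deconcatenation coproduct `Δ`.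
Then `Dᵢ = Rᵢ ∘ L_ψ`, where `Rᵢ` strips a trailing `xᵢ` from words and kills all other words.
Composition of the maps `L_φ` is dual to convolution of functionals on words, and `ψ(1) = 1`
makes `ψ` convolution-invertible, so `L_ψ` is a linear automorphism. Hence the system
`Dᵢ q = δᵢₘ p` (all `i`) is solved by `q = L_ψ⁻¹(p xₘ)`, and its solutions differ by elements of
`L_ψ⁻¹(⋂ᵢ ker Rᵢ) = L_ψ⁻¹(ℂ·1) = ℂ·1`; the normalisation `ψ(q) = 0` removes the constant.
The Appell polynomial `A_{k+1}` is the normalised solution for `p = A_k`.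
-/

open TensorProduct

/-- The product `x_{u(1)} ⋯ x_{u(n)}` of generators of the free algebra along a word. -/
noncomputable def wordProd (l : List ℕ) : FreeAlgebra ℂ ℕ :=
  (l.map (FreeAlgebra.ι ℂ)).prod

/-- The partial difference quotient `∂ᵢ`, the ℂ-linear map determined on the basis of
words by `∂ᵢ(x_{u(1)}⋯x_{u(n)}) = Σ_{j : u(j) = i} x_{u(1)}⋯x_{u(j−1)} ⊗ x_{u(j+1)}⋯x_{u(n)}`
(here `i` indexes the generator `FreeAlgebra.ι ℂ i`). -/
noncomputable def dq (i : ℕ) :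
    FreeAlgebra ℂ ℕ →ₗ[ℂ] FreeAlgebra ℂ ℕ ⊗[ℂ] FreeAlgebra ℂ ℕ :=
  (FreeAlgebra.basisFreeMonoid ℂ ℕ).constr ℂ fun w =>
    ∑ j ∈ Finset.range (FreeMonoid.toList w).length,
      if (FreeMonoid.toList w).getD j 0 = i then
        wordProd ((FreeMonoid.toList w).take j) ⊗ₜ[ℂ]
          wordProd ((FreeMonoid.toList w).drop (j + 1))
      else 0

/-- The map `(id ⊗ ψ) : a ⊗ b ↦ ψ(b)·a`. -/
noncomputable def idTensor (ψ : FreeAlgebra ℂ ℕ →ₗ[ℂ] ℂ) :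
    FreeAlgebra ℂ ℕ ⊗[ℂ] FreeAlgebra ℂ ℕ →ₗ[ℂ] FreeAlgebra ℂ ℕ :=
  TensorProduct.lift
    { toFun := fun a => ψ.smulRight a
      map_add' := by intro a b; ext c; simp
      map_smul' := by
        intro c a
        ext b
        simp only [LinearMap.smulRight_apply, LinearMap.smul_apply, RingHom.id_apply]
        rw [smul_comm] }

/-- The map `(ψ ⊗ id) : a ⊗ b ↦ ψ(a)·b`. -/
noncomputable def tensorId (ψ : FreeAlgebra ℂ ℕ →ₗ[ℂ] ℂ) :
    FreeAlgebra ℂ ℕ ⊗[ℂ] FreeAlgebra ℂ ℕ →ₗ[ℂ] FreeAlgebra ℂ ℕ :=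
  TensorProduct.lift
    { toFun := fun a => ψ a • (LinearMap.id : FreeAlgebra ℂ ℕ →ₗ[ℂ] FreeAlgebra ℂ ℕ)
      map_add' := by intro a b; simp [add_smul]
      map_smul' := by intro c a; simp [smul_smul] }

theorem basisFreeMonoid_apply (w : FreeMonoid ℕ) :
    FreeAlgebra.basisFreeMonoid ℂ ℕ w = wordProd (FreeMonoid.toList w) := by
  simp [FreeAlgebra.basisFreeMonoid, FreeAlgebra.equivMonoidAlgebraFreeMonoid,
    MonoidAlgebra.coeffLinearEquiv, FreeMonoid.lift_apply, wordProd]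

noncomputable def wordBasis : Module.Basis (List ℕ) ℂ (FreeAlgebra ℂ ℕ) :=
  (FreeAlgebra.basisFreeMonoid ℂ ℕ).reindex FreeMonoid.toList

theorem wordBasis_apply (l : List ℕ) : wordBasis l = wordProd l := by
  simp [wordBasis, basisFreeMonoid_apply]

theorem wordBasis_repr_wordProd (l : List ℕ) :
    wordBasis.repr (wordProd l) = Finsupp.single l 1 := by
  rw [← wordBasis_apply, Module.Basis.repr_self]

theorem wordBasis_repr_one : wordBasis.repr 1 = Finsupp.single [] 1 :=
  wordBasis_repr_wordProd []

theorem linearMap_ext_wordProd {M : Type*} [AddCommMonoid M] [Module ℂ M]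
    {f g : FreeAlgebra ℂ ℕ →ₗ[ℂ] M} (h : ∀ l, f (wordProd l) = g (wordProd l)) : f = g :=
  wordBasis.ext fun l => by rw [wordBasis_apply, h]

theorem dq_wordProd (i : ℕ) (l : List ℕ) :
    dq i (wordProd l) = ∑ j ∈ Finset.range l.length,
      if l.getD j 0 = i then wordProd (l.take j) ⊗ₜ[ℂ] wordProd (l.drop (j + 1)) else 0 := by
  rw [← FreeMonoid.toList_ofList l, ← basisFreeMonoid_apply, dq, Module.Basis.constr_basis]

theorem idTensor_tmul (ψ : FreeAlgebra ℂ ℕ →ₗ[ℂ] ℂ) (a b : FreeAlgebra ℂ ℕ) :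
    idTensor ψ (a ⊗ₜ[ℂ] b) = ψ b • a := by
  simp [idTensor]

noncomputable def rightDeriv (i : ℕ) : FreeAlgebra ℂ ℕ →ₗ[ℂ] FreeAlgebra ℂ ℕ :=
  wordBasis.repr.symm.toLinearMap ∘ₗ
    Finsupp.lcomapDomain (· ++ [i]) (List.append_left_injective [i]) ∘ₗ
    wordBasis.repr.toLinearMap

theorem wordBasis_repr_rightDeriv (i : ℕ) (p : FreeAlgebra ℂ ℕ) (l : List ℕ) :
    wordBasis.repr (rightDeriv i p) l = wordBasis.repr p (l ++ [i]) := by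
  simp [rightDeriv, Finsupp.comapDomain_apply]

theorem rightDeriv_wordProd_concat (i m : ℕ) (l : List ℕ) :
    rightDeriv i (wordProd (l ++ [m])) = if i = m then wordProd l else 0 := by
  refine wordBasis.ext_elem fun u => ?_
  rw [wordBasis_repr_rightDeriv, wordBasis_repr_wordProd]
  split_ifs with h
  · subst h; simp [wordBasis_repr_wordProd, Finsupp.single_apply]
  · simp [Ne.symm h]

theorem rightDeriv_one (i : ℕ) : rightDeriv i 1 = 0 :=
  wordBasis.ext_elem fun u => by simp [wordBasis_repr_rightDeriv, wordBasis_repr_one]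

theorem rightDeriv_mul_ι (i m : ℕ) (p : FreeAlgebra ℂ ℕ) :
    rightDeriv i (p * FreeAlgebra.ι ℂ m) = if i = m then p else 0 := by
  have h : rightDeriv i ∘ₗ LinearMap.mulRight ℂ (FreeAlgebra.ι ℂ m)
      = if i = m then LinearMap.id else 0 :=
    linearMap_ext_wordProd fun l => by
      have : wordProd l * FreeAlgebra.ι ℂ m = wordProd (l ++ [m]) := by
        simp [wordProd]
      simp only [LinearMap.comp_apply, LinearMap.mulRight_apply, this,
        rightDeriv_wordProd_concat]
      split_ifs <;> rfl
  simpa [apply_ite (fun f : FreeAlgebra ℂ ℕ →ₗ[ℂ] FreeAlgebra ℂ ℕ => f p)] using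
    LinearMap.congr_fun h p

theorem eq_smul_one_of_forall_rightDeriv_eq_zero {p : FreeAlgebra ℂ ℕ}
    (h : ∀ i, rightDeriv i p = 0) : p = wordBasis.repr p [] • 1 := by
  refine wordBasis.ext_elem fun l => ?_
  rcases List.eq_nil_or_concat l with rfl | ⟨u, i, rfl⟩
  · simp [wordBasis_repr_one]
  · rw [List.concat_eq_append, ← wordBasis_repr_rightDeriv, h]
    simp [wordBasis_repr_one]

/-- `(id ⊗ φ) ∘ Δ` for the deconcatenation coproduct `Δ w = ∑_{w = u v} u ⊗ v`, with the
functional `φ` given by its values on words. -/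
noncomputable def deconcat (φ : List ℕ → ℂ) : FreeAlgebra ℂ ℕ →ₗ[ℂ] FreeAlgebra ℂ ℕ :=
  wordBasis.constr ℂ fun l =>
    ∑ j ∈ Finset.range (l.length + 1), φ (l.drop j) • wordProd (l.take j)

theorem deconcat_wordProd (φ : List ℕ → ℂ) (l : List ℕ) :
    deconcat φ (wordProd l) =
      ∑ j ∈ Finset.range (l.length + 1), φ (l.drop j) • wordProd (l.take j) := by
  rw [← wordBasis_apply, deconcat, Module.Basis.constr_basis]

theorem deconcat_one (φ : List ℕ → ℂ) : deconcat φ 1 = φ [] • 1 := by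
  simpa [wordProd] using deconcat_wordProd φ []

def wordConv (φ χ : List ℕ → ℂ) (l : List ℕ) : ℂ :=
  ∑ j ∈ Finset.range (l.length + 1), φ (l.take j) * χ (l.drop j)

theorem deconcat_comp_deconcat (φ χ : List ℕ → ℂ) :
    deconcat φ ∘ₗ deconcat χ = deconcat (wordConv φ χ) := by
  refine linearMap_ext_wordProd fun l => ?_
  have inner : ∀ j ∈ Finset.range (l.length + 1),
      χ (l.drop j) • deconcat φ (wordProd (l.take j)) =
        ∑ k ∈ Finset.range (j + 1),
          (φ ((l.take j).drop k) * χ (l.drop j)) • wordProd (l.take k) := by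
    intro j hj
    rw [deconcat_wordProd, List.length_take_of_le (by simp at hj; omega), Finset.smul_sum]
    refine Finset.sum_congr rfl fun k hk => ?_
    rw [List.take_take, min_eq_left (by simp at hk; omega), smul_smul, mul_comm]
  have outer : ∀ k ∈ Finset.range (l.length + 1),
      ∑ j ∈ Finset.Ico k (l.length + 1),
          (φ ((l.take j).drop k) * χ (l.drop j)) • wordProd (l.take k) =
        wordConv φ χ (l.drop k) • wordProd (l.take k) := by
    intro k hk
    rw [← Finset.sum_smul, wordConv, Finset.sum_Ico_eq_sum_range, List.length_drop,
      show l.length + 1 - k = l.length - k + 1 by simp at hk; omega]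
    congr 1
    refine Finset.sum_congr rfl fun m _ => ?_
    rw [List.drop_take, List.drop_drop, Nat.add_sub_cancel_left]
  rw [LinearMap.comp_apply, deconcat_wordProd, map_sum, deconcat_wordProd]
  simp only [map_smul]
  rw [Finset.sum_congr rfl inner]
  simp only [Finset.range_eq_Ico] at outer ⊢
  rw [← Finset.sum_Ico_Ico_comm]
  exact Finset.sum_congr rfl outer

def wordCounit (l : List ℕ) : ℂ :=
  if l = [] then 1 else 0

theorem deconcat_wordCounit : deconcat wordCounit = LinearMap.id := by
  refine linearMap_ext_wordProd fun l => ?_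
  rw [deconcat_wordProd, Finset.sum_range_succ, Finset.sum_eq_zero fun j hj => ?_]
  · simp [wordCounit]
  · simp only [Finset.mem_range] at hj
    simp [wordCounit, List.drop_eq_nil_iff, hj.not_ge]

noncomputable def wordConvInv (φ : List ℕ → ℂ) : List ℕ → ℂ
  | [] => 1
  | a :: t => -∑ j ∈ Finset.range (t.length + 1),
      φ ((a :: t).take (j + 1)) * wordConvInv φ (t.drop j)
  termination_by l => l.length
  decreasing_by simp

theorem wordConvInv_nil (φ : List ℕ → ℂ) : wordConvInv φ [] = 1 := by
  rw [wordConvInv]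

theorem wordConv_wordConvInv {φ : List ℕ → ℂ} (h : φ [] = 1) :
    wordConv φ (wordConvInv φ) = wordCounit := by
  funext l
  cases l with
  | nil => simp [wordConv, wordCounit, wordConvInv_nil, h]
  | cons a t =>
    rw [wordConv, Finset.sum_range_succ']
    simp [h, wordConvInv, wordCounit]

theorem deconcat_deconcat_wordConvInv {φ : List ℕ → ℂ} (h : φ [] = 1)
    (p : FreeAlgebra ℂ ℕ) : deconcat φ (deconcat (wordConvInv φ) p) = p := by
  rw [← LinearMap.comp_apply, deconcat_comp_deconcat, wordConv_wordConvInv h,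
    deconcat_wordCounit, LinearMap.id_apply]

theorem deconcat_wordConvInv_deconcat {φ : List ℕ → ℂ} (h : φ [] = 1)
    (p : FreeAlgebra ℂ ℕ) : deconcat (wordConvInv φ) (deconcat φ p) = p := by
  -- `deconcat (wordConvInv φ)` has a right inverse too, so its right inverse `deconcat φ`
  -- is also a left inverse.
  obtain ⟨r, rfl⟩ : ∃ r, deconcat (wordConvInv φ)
      (deconcat (wordConvInv (wordConvInv φ)) r) = p :=
    ⟨p, deconcat_deconcat_wordConvInv (wordConvInv_nil φ) p⟩
  rw [deconcat_deconcat_wordConvInv h]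

theorem idTensor_comp_dq (ψ : FreeAlgebra ℂ ℕ →ₗ[ℂ] ℂ) (i : ℕ) :
    idTensor ψ ∘ₗ dq i = rightDeriv i ∘ₗ deconcat (fun l => ψ (wordProd l)) := by
  refine linearMap_ext_wordProd fun l => ?_
  rw [LinearMap.comp_apply, dq_wordProd, map_sum, LinearMap.comp_apply, deconcat_wordProd,
    map_sum, Finset.sum_range_succ']
  simp only [map_smul, List.take_zero]
  rw [show wordProd [] = 1 from rfl, rightDeriv_one, smul_zero, add_zero]
  refine Finset.sum_congr rfl fun j hj => ?_
  have hj : j < l.length := Finset.mem_range.mp hj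
  rw [List.take_succ_eq_append_getElem hj, rightDeriv_wordProd_concat,
    List.getD_eq_getElem _ _ hj]
  simp only [eq_comm (a := i)]
  split_ifs <;> simp [idTensor_tmul]

theorem idTensor_dq_apply (ψ : FreeAlgebra ℂ ℕ →ₗ[ℂ] ℂ) (i : ℕ) (p : FreeAlgebra ℂ ℕ) :
    idTensor ψ (dq i p) = rightDeriv i (deconcat (fun l => ψ (wordProd l)) p) :=
  LinearMap.congr_fun (idTensor_comp_dq ψ i) p

theorem exists_forall_idTensor_dq_eq_ite {ψ : FreeAlgebra ℂ ℕ →ₗ[ℂ] ℂ} (hψ1 : ψ 1 = 1)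
    (p : FreeAlgebra ℂ ℕ) (m : ℕ) :
    ∃ q, ψ q = 0 ∧ ∀ i, idTensor ψ (dq i q) = if i = m then p else 0 := by
  set q₀ := deconcat (wordConvInv fun l => ψ (wordProd l)) (p * FreeAlgebra.ι ℂ m)
  refine ⟨q₀ - ψ q₀ • 1, by simp [hψ1], fun i => ?_⟩
  rw [map_sub, map_smul, map_sub, map_smul, idTensor_dq_apply, idTensor_dq_apply,
    deconcat_deconcat_wordConvInv hψ1,
    deconcat_one, rightDeriv_mul_ι, map_smul, rightDeriv_one, smul_zero, smul_zero, sub_zero]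

theorem eq_of_forall_idTensor_dq_eq {ψ : FreeAlgebra ℂ ℕ →ₗ[ℂ] ℂ} (hψ1 : ψ 1 = 1)
    {p q : FreeAlgebra ℂ ℕ} (hψ : ψ p = ψ q)
    (hD : ∀ i, idTensor ψ (dq i p) = idTensor ψ (dq i q)) : p = q := by
  set φ : List ℕ → ℂ := fun l => ψ (wordProd l)
  set c := wordBasis.repr (deconcat φ (p - q)) []
  have hconst : deconcat φ (p - q) = c • 1 :=
    eq_smul_one_of_forall_rightDeriv_eq_zero fun i => by
      rw [← idTensor_dq_apply, map_sub, map_sub, hD, sub_self]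
  have hpq : p - q = c • 1 := by
    rw [← deconcat_wordConvInv_deconcat (φ := φ) hψ1 (p - q), hconst, map_smul, deconcat_one,
      wordConvInv_nil, one_smul]
  have hc : c = 0 := by simpa [hψ, hψ1, eq_comm] using congrArg ψ hpq
  rwa [hc, zero_smul, sub_eq_zero] at hpq

-- The generator `x_k` of the informal statement is `FreeAlgebra.ι ℂ (k - 1)`.
/-- with the convention `x_j := FreeAlgebra.ι ℂ (j − 1)`, so that `∂_{x_{i+1}}`
is `dq i`: for a unital linear functional `ψ` on `ℂ⟨x₁, x₂, …⟩` there is a unique sequence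
`A₀ = 1, A₁, A₂, …` with `ψ(Aₖ) = 0` for `k ≥ 1` and
`(id ⊗ ψ)(∂ᵢ Aₖ) = A_{k−1}` if `i = k`, `= 0` otherwise — the free Appell polynomials. -/
theorem free_appell_exists_unique (ψ : FreeAlgebra ℂ ℕ →ₗ[ℂ] ℂ) (hψ1 : ψ 1 = 1) :
    ∃! A : ℕ → FreeAlgebra ℂ ℕ, A 0 = 1 ∧
      ∀ k, 1 ≤ k → ψ (A k) = 0 ∧
        ∀ i : ℕ, idTensor ψ (dq i (A k)) = if i + 1 = k then A (k - 1) else 0 := by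
  choose lift hlift_ψ hlift_dq using exists_forall_idTensor_dq_eq_ite hψ1
  let A : ℕ → FreeAlgebra ℂ ℕ := fun k => k.rec 1 fun n a => lift a n
  have hA : ∀ n, A (n + 1) = lift (A n) n := fun _ => rfl
  refine ⟨A, ⟨rfl, fun k hk => ?_⟩, fun B ⟨hB0, hB⟩ => funext fun k => ?_⟩
  · obtain ⟨n, rfl⟩ := Nat.exists_eq_add_of_le' hk
    exact ⟨hlift_ψ _ _, fun i => by simp [hA, hlift_dq]⟩
  · induction k with
    | zero => exact hB0
    | succ n ih =>
      obtain ⟨hBψ, hBdq⟩ := hB (n + 1) n.succ_pos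
      rw [hA]
      refine eq_of_forall_idTensor_dq_eq hψ1 (hBψ.trans (hlift_ψ _ _).symm) fun i => ?_
      rw [hBdq, hlift_dq]
      simp [ih]
end

section
/- For all n ≥ 1 and all f₁, …, fₙ ∈ A₀, the c-free Kailath–Segall element admits the closed formula: W(f₁, …, fₙ) = Σ over all compositions (c₁, …, c_k) of n, with blocks B₁, …, B_k, and over all subsets S of the set of singleton blocks, of the term (−1)^{n−k+|S|} · (∏_{B ∈ S, B ≠ {n}} ν(f_B)) · (μ(fₙ) if {n} ∈ S, else 1) · ∏_{B ∉ S, blocks taken in increasing order} X(f_B), where a product over an empty index set equals 1. -/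
variable {A₀ : Type*} [NonUnitalRing A₀] [Module ℂ A₀]
  [SMulCommClass ℂ A₀ A₀] [IsScalarTower ℂ A₀ A₀]
variable {B : Type*} [Ring B] [Algebra ℂ B]

/-- The c-free Kailath–Segall elements `W(f₁, …, fₙ)`, defined by the inductive
recursions `W() = 1`, `W(f) = X(f) − μ(f)·1`,
`W(f, f₁) = X(f)·W(f₁) − W(f·f₁) − μ(f·f₁)·1 − ν(f)·W(f₁)`, and for `n ≥ 2`
`W(f, f₁, …, fₙ) = X(f)·W(f₁, …, fₙ) − W(f·f₁, f₂, …, fₙ) − ν(f·f₁)·W(f₂, …, fₙ)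
− ν(f)·W(f₁, …, fₙ)`. -/
noncomputable def KS (X : A₀ →ₗ[ℂ] B) (μ ν : A₀ →ₗ[ℂ] ℂ) : List A₀ → B
  | [] => 1
  | [f] => X f - μ f • (1 : B)
  | [f, f₁] =>
      X f * KS X μ ν [f₁] - KS X μ ν [f * f₁] - μ (f * f₁) • (1 : B)
        - ν f • KS X μ ν [f₁]
  | f :: f₁ :: f₂ :: r =>
      X f * KS X μ ν (f₁ :: f₂ :: r) - KS X μ ν ((f * f₁) :: f₂ :: r)
        - ν (f * f₁) • KS X μ ν (f₂ :: r) - ν f • KS X μ ν (f₁ :: f₂ :: r)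
  termination_by l => l.length
  decreasing_by all_goals simp

/-- For a composition `c` of `n` and `j < c.length`, the product `f_B` of the (1-indexed)
`f`'s over the `j`-th block `B = {c.sizeUpTo j + 1, …, c.sizeUpTo (j+1)}` of `c`. -/
noncomputable def blockProd (f : ℕ → A₀) {n : ℕ} (c : Composition n)
    (j : Fin c.length) : A₀ :=
  match (List.range (c.blocksFun j)).map (fun t => f (c.sizeUpTo j + 1 + t)) with
  | [] => 0
  | a :: t => t.foldl (· * ·) a

/-!
Unfolding the recursion along its first argument expands `W(a, l)` over the length of the first
block: `W(a, l) = ∑ₖ (-1)ᵏ X(a l₁ ⋯ lₖ) W(lₖ₊₁, …) - φ(a) W(l)`, with `φ = μ` if `l = []` and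
`φ = ν` otherwise. Iterating, `W(f₁, …, fₙ)` is the sum over compositions of `n` of the ordered
product over the blocks `B` of `(-1)^{|B|-1} (X(f_B) - [|B| = 1] φ_B(f_B))`, where `φ_B = μ` for
the last block and `ν` otherwise. The scalar terms are central, so expanding each product over
the set `S` of singleton blocks at which the scalar term is chosen gives the closed formula; the
signs combine to `(-1)^{n-k+|S|}` because `∑ (|B| - 1) = n - k`.
-/

theorem List.prod_map_smul_eq_smul_prod {ι K R : Type*} [CommMonoid K] [Monoid R] [MulAction K R]
    [IsScalarTower K R R] [SMulCommClass K R R] (l : List ι) (s : ι → K) (v : ι → R) :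
    (l.map fun i => s i • v i).prod = (l.map s).prod • (l.map v).prod := by
  induction l with
  | nil => simp
  | cons a t ih => simp only [List.map_cons, List.prod_cons, ih, smul_mul_smul_comm]

theorem List.prod_map_add_smul_one {ι K R : Type*} [DecidableEq ι] [CommSemiring K] [Semiring R]
    [Algebra K R] (l : List ι) (hl : l.Nodup) (u : ι → R) (m : ι → K) :
    (l.map fun i => u i + m i • 1).prod =
      ∑ S ∈ l.toFinset.powerset,
        (∏ i ∈ S, m i) • ((l.filter fun i => decide (i ∉ S)).map u).prod := by
  induction l with
  | nil => simp
  | cons a t ih =>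
    obtain ⟨hat, ht⟩ := List.nodup_cons.1 hl
    have hat' : a ∉ t.toFinset := by simpa using hat
    rw [List.map_cons, List.prod_cons, ih ht, List.toFinset_cons,
      Finset.sum_powerset_insert hat', add_mul, Finset.mul_sum, Finset.mul_sum]
    congr 1 <;> refine Finset.sum_congr rfl fun S hS => ?_
    · have haS : a ∉ S := fun h => hat' (Finset.mem_powerset.1 hS h)
      rw [List.filter_cons_of_pos (by simpa using haS), List.map_cons, List.prod_cons,
        mul_smul_comm]
    · have haS : a ∉ S := fun h => hat' (Finset.mem_powerset.1 hS h)
      have hfilter :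
          t.filter (fun i => decide (i ∉ insert a S)) = t.filter fun i => decide (i ∉ S) :=
        List.filter_congr fun i hi => by
          simp [Finset.mem_insert, show i ≠ a from fun h => hat (h ▸ hi)]
      rw [Finset.prod_insert haS, List.filter_cons_of_neg (by simp), hfilter, smul_mul_assoc,
        one_mul, smul_smul]

theorem Composition.sum_succ_eq_sum_cons {M : Type*} [AddCommMonoid M] (n : ℕ)
    (g : List ℕ → M) :
    ∑ c : Composition (n + 1), g c.blocks =
      ∑ k ∈ Finset.range (n + 1), ∑ c : Composition (n - k), g ((k + 1) :: c.blocks) := by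
  rw [Finset.sum_sigma']
  refine (Finset.sum_bij (fun p hp => (⟨(p.1 + 1) :: p.2.blocks,
      fun {i} hi => by
        rcases List.mem_cons.1 hi with rfl | hi
        exacts [Nat.succ_pos _, p.2.blocks_pos hi],
      by
        have := Finset.mem_range.1 (Finset.mem_sigma.1 hp).1
        rw [List.sum_cons, p.2.blocks_sum]; omega⟩ :
        Composition (n + 1)))
    (fun _ _ => Finset.mem_univ _) ?_ ?_ (fun _ _ => rfl)).symm
  · rintro ⟨k, c⟩ _ ⟨k', c'⟩ _ h
    have hblocks := congrArg Composition.blocks h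
    simp only [List.cons.injEq, Nat.add_right_cancel_iff] at hblocks
    obtain ⟨rfl, hc⟩ := hblocks
    exact Sigma.ext rfl (heq_of_eq (Composition.ext hc))
  · intro c _
    obtain ⟨b, t, hbt⟩ := List.exists_cons_of_ne_nil (c.blocks_eq_nil.not.2 n.succ_ne_zero)
    have hb : 0 < b := c.blocks_pos (hbt ▸ List.mem_cons_self)
    have hsum : b + t.sum = n + 1 := by rw [← List.sum_cons, ← hbt, c.blocks_sum]
    refine ⟨⟨b - 1, ⟨t, fun hi => c.blocks_pos (hbt ▸ List.mem_cons_of_mem _ hi), by omega⟩⟩,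
      Finset.mem_sigma.2 ⟨Finset.mem_range.2 (by dsimp only; omega), Finset.mem_univ _⟩,
      Composition.ext ?_⟩
    show (b - 1 + 1) :: t = c.blocks
    rw [hbt, Nat.sub_add_cancel hb]

theorem Composition.sum_blocksFun_sub_one {n : ℕ} (c : Composition n) :
    ∑ j, (c.blocksFun j - 1) = n - c.length := by
  rw [Finset.sum_tsub_distrib _ fun j _ => c.one_le_blocksFun j, c.sum_blocksFun]
  simp

/-- The list `(f_i)_{i ∈ B_j}` for the `j`-th block `B_j` of `c` (indices start at `1`). -/
def blockList {α : Type*} (f : ℕ → α) {n : ℕ} (c : Composition n) (j : Fin c.length) : List α :=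
  (List.range (c.blocksFun j)).map fun t => f (c.sizeUpTo j + 1 + t)

theorem take_drop_eq_blockList {α : Type*} (f : ℕ → α) {n : ℕ} (c : Composition n)
    (j : Fin c.length) :
    (((List.range n).map fun t => f (t + 1)).drop (c.blocks.take j).sum).take c.blocks[j] =
      blockList f c j := by
  have hle : c.sizeUpTo j + c.blocksFun j ≤ n := c.sizeUpTo_succ' j ▸ c.sizeUpTo_le _
  simp only [Composition.sizeUpTo, Composition.blocksFun, List.get_eq_getElem] at hle
  apply List.ext_getElem
  · simp only [blockList, Composition.blocksFun, List.get_eq_getElem, Fin.getElem_fin,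
      List.length_take, List.length_drop, List.length_map, List.length_range]
    omega
  · intro i _ _
    simp only [blockList, Composition.sizeUpTo, Composition.blocksFun, List.getElem_take,
      List.getElem_drop, List.getElem_map, List.getElem_range]
    rw [Nat.add_right_comm]

theorem blockProd_eq_of_last_singleton {R : Type*} [NonUnitalRing R] (f : ℕ → R) {n : ℕ}
    (c : Composition n) (j : Fin c.length) (hj : (j : ℕ) + 1 = c.length)
    (hsingle : c.blocksFun j = 1) : blockProd f c j = f n := by
  have hn := c.sizeUpTo_succ' j
  rw [hj, c.sizeUpTo_length, hsingle] at hn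
  simp [blockProd, hsingle, hn]

section KailathSegall

variable {A : Type*} [NonUnitalRing A] [Module ℂ A] (X : A →ₗ[ℂ] B) (μ ν : A →ₗ[ℂ] ℂ)

theorem KS_cons_cons (a g : A) (l : List A) :
    KS X μ ν (a :: g :: l) = X a * KS X μ ν (g :: l) - KS X μ ν (a * g :: l)
      - (if l = [] then μ else ν) (a * g) • KS X μ ν l - ν a • KS X μ ν (g :: l) := by
  cases l with
  | nil => rw [KS.eq_3, KS.eq_1, if_pos rfl]
  | cons h t => rw [KS.eq_4, if_neg (List.cons_ne_nil h t)]

theorem KS_cons (a : A) (l : List A) :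
    KS X μ ν (a :: l) =
      ∑ k ∈ Finset.range (l.length + 1),
          ((-1 : ℂ) ^ k • X ((l.take k).foldl (· * ·) a)) * KS X μ ν (l.drop k)
        - (if l = [] then μ else ν) a • KS X μ ν l := by
  induction l generalizing a with
  | nil => simp [KS.eq_1, KS.eq_2]
  | cons g l ih =>
    rw [KS_cons_cons, ih (a * g), List.length_cons, Finset.sum_range_succ' _ (l.length + 1),
      if_neg (List.cons_ne_nil g l)]
    simp only [List.take_succ_cons, List.drop_succ_cons, List.foldl_cons, pow_succ, mul_neg_one,
      neg_smul, neg_mul, Finset.sum_neg_distrib, pow_zero, one_smul, List.take_zero, List.foldl_nil,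
      List.drop_zero]
    abel

/-- `blockProd f c j` is by definition `nonemptyProd (blockList f c j)`, junk value at `[]`
included. -/
def nonemptyProd : List A → A
  | [] => 0
  | a :: t => t.foldl (· * ·) a

/-- The sign is `1` whenever the scalar term is present, so it may multiply both terms. -/
noncomputable def blockFactor (φ : A →ₗ[ℂ] ℂ) (block : List A) : B :=
  (-1 : ℂ) ^ (block.length - 1) •
    (X (nonemptyProd block) - (if block.length = 1 then φ (nonemptyProd block) else 0) • 1)

theorem blockFactor_cons (φ : A →ₗ[ℂ] ℂ) (a : A) (t : List A) :
    blockFactor X φ (a :: t) =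
      (-1 : ℂ) ^ t.length • (X (t.foldl (· * ·) a) - (if t = [] then φ a else 0) • 1) := by
  cases t <;> simp [blockFactor, nonemptyProd]

theorem KS_cons_eq_sum_blockFactor (a : A) (l : List A) :
    KS X μ ν (a :: l) =
      ∑ k ∈ Finset.range (l.length + 1),
        blockFactor X (if l.drop k = [] then μ else ν) (a :: l.take k) * KS X μ ν (l.drop k) := by
  rw [KS_cons, Finset.sum_range_succ', Finset.sum_range_succ', add_sub_assoc]
  congr 1
  · refine Finset.sum_congr rfl fun k hk => ?_
    have hlen : (l.take (k + 1)).length = k + 1 :=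
      List.length_take_of_le (Finset.mem_range.1 hk)
    rw [blockFactor_cons, hlen, if_neg (List.ne_nil_of_length_pos (by omega)), zero_smul, sub_zero]
  · simp [blockFactor_cons, sub_mul]

noncomputable def compositionTerm : List A → List ℕ → B
  | _, [] => 1
  | l, k :: bs =>
      blockFactor X (if bs = [] then μ else ν) (l.take k) * compositionTerm (l.drop k) bs

theorem KS_eq_sum_compositionTerm (n : ℕ) (l : List A) (hl : l.length = n) :
    KS X μ ν l = ∑ c : Composition n, compositionTerm X μ ν l c.blocks := by
  induction n using Nat.strong_induction_on generalizing l with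
  | _ n ih =>
  cases l with
  | nil =>
    rw [List.length_nil] at hl
    subst hl
    rw [KS.eq_1, Fintype.sum_eq_single (Composition.ones 0) fun c hc =>
      absurd (Composition.ext (c.blocks_eq_nil.2 rfl)) hc]
    rfl
  | cons a l =>
    rw [List.length_cons] at hl
    subst hl
    rw [KS_cons_eq_sum_blockFactor, Composition.sum_succ_eq_sum_cons]
    refine Finset.sum_congr rfl fun k hk => ?_
    have hk : k ≤ l.length := Nat.lt_succ_iff.1 (Finset.mem_range.1 hk)
    rw [ih (l.length - k) (by omega) (l.drop k) List.length_drop, Finset.mul_sum]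
    refine Finset.sum_congr rfl fun c _ => ?_
    have hlast : c.blocks = [] ↔ l.drop k = [] := by
      rw [c.blocks_eq_nil, List.drop_eq_nil_iff]; omega
    rw [compositionTerm, List.take_succ_cons, List.drop_succ_cons, if_congr hlast rfl rfl]

theorem compositionTerm_eq_prod (l : List A) (bs : List ℕ) :
    compositionTerm X μ ν l bs =
      ((List.finRange bs.length).map fun j : Fin bs.length =>
        blockFactor X (if (j : ℕ) + 1 = bs.length then μ else ν)
          ((l.drop (bs.take j).sum).take bs[j])).prod := by
  induction bs generalizing l with
  | nil => rfl
  | cons k bs ih =>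
    rw [compositionTerm, ih, show List.finRange (k :: bs).length = _ from List.finRange_succ,
      List.map_cons, List.prod_cons, List.map_map]
    congr 2
    · simp [List.length_eq_zero_iff]
    · refine List.map_congr_left fun j _ => ?_
      simp [List.drop_drop]

theorem prod_ite_last_apply_blockProd (f : ℕ → A) {n : ℕ} (c : Composition n)
    (S : Finset (Fin c.length)) (hS : ∀ j ∈ S, c.blocksFun j = 1) :
    ∏ j ∈ S, (if (j : ℕ) + 1 = c.length then μ else ν) (blockProd f c j) =
      (∏ j ∈ S.filter fun j : Fin c.length => (j : ℕ) + 1 ≠ c.length, ν (blockProd f c j))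
        * (if ∃ j ∈ S, (j : ℕ) + 1 = c.length then μ (f n) else 1) := by
  simp only [DFunLike.ite_apply]
  rw [Finset.prod_ite, mul_comm]
  congr 1
  split_ifs with hlast
  · obtain ⟨j, hjS, hj⟩ := hlast
    rw [Finset.prod_eq_single_of_mem j (Finset.mem_filter.2 ⟨hjS, hj⟩) fun i hi hij =>
      absurd (Fin.ext (by have := (Finset.mem_filter.1 hi).2; omega)) hij]
    exact congrArg μ (blockProd_eq_of_last_singleton f c j hj (hS j hjS))
  · rw [Finset.filter_false_of_mem fun j hj hlast' => hlast ⟨j, hj, hlast'⟩, Finset.prod_empty]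

theorem prod_blockFactor_eq_sum_powerset (f : ℕ → A) {n : ℕ} (c : Composition n) :
    ((List.finRange c.length).map fun j : Fin c.length =>
        blockFactor X (if (j : ℕ) + 1 = c.length then μ else ν) (blockList f c j)).prod =
      ∑ S ∈ (Finset.univ.filter fun j : Fin c.length => c.blocksFun j = 1).powerset,
        ((-1 : ℂ) ^ (n - c.length + S.card)
            * (∏ j ∈ S.filter fun j : Fin c.length => (j : ℕ) + 1 ≠ c.length, ν (blockProd f c j))
            * (if ∃ j ∈ S, (j : ℕ) + 1 = c.length then μ (f n) else 1)) •
          (((List.finRange c.length).filter fun j => decide (j ∉ S)).map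
            fun j => X (blockProd f c j)).prod := by
  set φ : Fin c.length → A →ₗ[ℂ] ℂ := fun j => if (j : ℕ) + 1 = c.length then μ else ν
  set m : Fin c.length → ℂ := fun j => -(if c.blocksFun j = 1 then φ j (blockProd f c j) else 0)
  have hfactor : ∀ j, blockFactor X (φ j) (blockList f c j) =
      (-1 : ℂ) ^ (c.blocksFun j - 1) • (X (blockProd f c j) + m j • 1) := fun j => by
    simp only [blockFactor, blockList, List.length_map, List.length_range, m, neg_smul,
      ← sub_eq_add_neg]
    rfl
  have hvanish : ∀ S ∈ (Finset.univ : Finset (Fin c.length)).powerset,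
      S ∉ (Finset.univ.filter fun j : Fin c.length => c.blocksFun j = 1).powerset →
        (∏ j ∈ S, m j) • (((List.finRange c.length).filter fun j => decide (j ∉ S)).map
            fun j => X (blockProd f c j)).prod = 0 := fun S _ hS => by
    obtain ⟨j, hjS, hj⟩ := Finset.not_subset.1 (Finset.mem_powerset.not.1 hS)
    rw [Finset.prod_eq_zero hjS (by simp [m, by simpa using hj]), zero_smul]
  rw [List.map_congr_left fun j _ => hfactor j, List.prod_map_smul_eq_smul_prod,
    List.prod_map_add_smul_one _ (List.nodup_finRange _), List.toFinset_finRange,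
    ← Fin.prod_univ_def, Finset.prod_pow_eq_pow_sum, c.sum_blocksFun_sub_one,
    ← Finset.sum_subset (Finset.powerset_mono.2 (Finset.filter_subset _ _)) hvanish,
    Finset.smul_sum]
  refine Finset.sum_congr rfl fun S hS => ?_
  have hsingle : ∀ j ∈ S, c.blocksFun j = 1 := fun j hj =>
    (Finset.mem_filter.1 (Finset.mem_powerset.1 hS hj)).2
  have hm : ∏ j ∈ S, m j = (-1) ^ S.card * ∏ j ∈ S, φ j (blockProd f c j) := by
    rw [← Finset.prod_neg]
    exact Finset.prod_congr rfl fun j hj => by simp [m, hsingle j hj]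
  rw [smul_smul, hm, prod_ite_last_apply_blockProd μ ν f c S hsingle, pow_add]
  ring_nf

end KailathSegall

theorem kailath_segall_closed_formula_general (X : A₀ →ₗ[ℂ] B) (μ ν : A₀ →ₗ[ℂ] ℂ)
    (n : ℕ) (f : ℕ → A₀) :
    KS X μ ν ((List.range n).map fun t => f (t + 1)) =
      ∑ c : Composition n,
        ∑ S ∈ (Finset.univ.filter fun j : Fin c.length => c.blocksFun j = 1).powerset,
          ((-1 : ℂ) ^ (n - c.length + S.card)
              * (∏ j ∈ S.filter fun j : Fin c.length => (j : ℕ) + 1 ≠ c.length, ν (blockProd f c j))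
              * (if ∃ j ∈ S, (j : ℕ) + 1 = c.length then μ (f n) else 1)) •
            (((List.finRange c.length).filter fun j => decide (j ∉ S)).map
              fun j => X (blockProd f c j)).prod := by
  rw [KS_eq_sum_compositionTerm X μ ν n _ (by simp)]
  refine Finset.sum_congr rfl fun c _ => ?_
  rw [compositionTerm_eq_prod, ← prod_blockFactor_eq_sum_powerset]
  congr 1
  refine List.map_congr_left fun j _ => ?_
  rw [take_drop_eq_blockList]

/-- the closed formula for the c-free Kailath–Segall element
`W(f₁, …, fₙ)` as a sum over compositions `c` of `n` (with blocks `B₁, …, B_k`) and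
subsets `S` of the set of singleton blocks of `c`. -/
theorem kailath_segall_closed_formula (X : A₀ →ₗ[ℂ] B) (μ ν : A₀ →ₗ[ℂ] ℂ)
    (n : ℕ) (hn : 1 ≤ n) (f : ℕ → A₀) :
    KS X μ ν ((List.range n).map fun t => f (t + 1)) =
      ∑ c : Composition n,
        ∑ S ∈ (Finset.univ.filter fun j : Fin c.length => c.blocksFun j = 1).powerset,
          ((-1 : ℂ) ^ (n - c.length + S.card)
              * (∏ j ∈ S.filter fun j : Fin c.length => (j : ℕ) + 1 ≠ c.length, ν (blockProd f c j))
              * (if ∃ j ∈ S, (j : ℕ) + 1 = c.length then μ (f n) else 1)) •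
            (((List.finRange c.length).filter fun j => decide (j ∉ S)).map
              fun j => X (blockProd f c j)).prod :=
  kailath_segall_closed_formula_general X μ ν n f
end

section
/- In the ring of formal power series in z with coefficients in ℂ[x], the one-variable c-free Appell polynomials satisfy the generating function identity (1 − x·z + Σ_{k≥1} rₖzᵏ) · (1 + Σ_{n≥1} Aₙ(x)·zⁿ) = 1 + Σ_{k≥1} rₖzᵏ − Σ_{k≥1} sₖzᵏ. -/
open Polynomial

/-- The one-variable c-free Appell polynomials: `A₀ = 1` and
`Aₙ₊₁ = x·Aₙ − Σ_{j=1}^{n} rⱼ·A_{n+1−j} − s_{n+1}·1`. -/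
noncomputable def cfAppell (r s : ℕ → ℂ) : ℕ → Polynomial ℂ
  | 0 => 1
  | n + 1 =>
      X * cfAppell r s n
        - ∑ j ∈ Finset.range n, C (r (j + 1)) * cfAppell r s (n - j)
        - C (s (n + 1))
  termination_by n => n
  decreasing_by all_goals omega

/-! The coefficient of `z^(n+1)` in the product is `A_{n+1} − x·A_n + Σ_{j=0}^{n} r_{j+1}·A_{n−j}`.
The recurrence makes all but the last summand cancel against `−s_{n+1}`, and the last one is
`r_{n+1}·A₀ = r_{n+1}`. -/

namespace cfAppell

variable (r s : ℕ → ℂ)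

lemma zero : cfAppell r s 0 = 1 := by
  rw [cfAppell]

lemma succ (n : ℕ) :
    cfAppell r s (n + 1) =
      X * cfAppell r s n
        - ∑ j ∈ Finset.range n, C (r (j + 1)) * cfAppell r s (n - j)
        - C (s (n + 1)) := by
  rw [cfAppell]

lemma succ_sub_X_mul_add_sum (n : ℕ) :
    cfAppell r s (n + 1) - X * cfAppell r s n
        + ∑ j ∈ Finset.range (n + 1), C (r (j + 1)) * cfAppell r s (n - j) =
      C (r (n + 1)) - C (s (n + 1)) := by
  rw [succ, Finset.sum_range_succ, Nat.sub_self, zero, mul_one]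
  ring

end cfAppell

namespace PowerSeries

lemma coeff_succ_mk_mul_mk {R : Type*} [CommRing R] (x : R) (ρ a : ℕ → R) (n : ℕ) :
    coeff (n + 1) ((mk fun k => if k = 0 then 1 else ρ k - if k = 1 then x else 0) * mk a) =
      a (n + 1) - x * a n + ∑ j ∈ Finset.range (n + 1), ρ (j + 1) * a (n - j) := by
  have shifted : ∀ j ∈ Finset.range (n + 1),
      (ρ (j + 1) - if j + 1 = 1 then x else 0) * a (n - j) =
        ρ (j + 1) * a (n - j) - if j = 0 then x * a n else 0 := by
    intro j _
    rcases eq_or_ne j 0 with rfl | hj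
    · simp [sub_mul]
    · simp [hj]
  rw [PowerSeries.coeff_mul, Finset.Nat.sum_antidiagonal_succ,
    Finset.Nat.sum_antidiagonal_eq_sum_range_succ_mk]
  simp only [coeff_mk, Nat.add_eq_zero_iff, one_ne_zero, and_false, if_false, if_true, one_mul]
  rw [Finset.sum_congr rfl shifted, Finset.sum_sub_distrib, Finset.sum_ite_eq' _ 0 (fun _ => x * a n),
    if_pos (Finset.mem_range.2 n.succ_pos)]
  ring

end PowerSeries

/-- in `(ℂ[x])[[z]]`, the c-free Appell polynomials satisfy
`(1 − x·z + Σ_{k≥1} rₖ zᵏ) · (1 + Σ_{n≥1} Aₙ(x) zⁿ) = 1 + Σ_{k≥1} rₖ zᵏ − Σ_{k≥1} sₖ zᵏ`. -/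
theorem cfAppell_generating_function (r s : ℕ → ℂ) :
    (PowerSeries.mk fun k =>
        if k = 0 then 1 else C (r k) - if k = 1 then (X : Polynomial ℂ) else 0) *
      (PowerSeries.mk fun n => cfAppell r s n) =
    PowerSeries.mk fun k =>
      if k = 0 then 1 else C (r k) - C (s k) := by
  ext (_ | n)
  · simp [cfAppell.zero]
  · rw [PowerSeries.coeff_succ_mk_mul_mk, cfAppell.succ_sub_X_mul_add_sum, PowerSeries.coeff_mk,
      if_neg n.succ_ne_zero]
end

section
/- Let Bₙ ∈ ℂ[x] be defined by B₀ = 1 and Bₙ₊₁ = x·Bₙ − Σ_{j=1}^{n+1} rⱼ·B_{n+1−j} for n ≥ 0 (the one-variable free Appell polynomials, i.e., the same recursion with sₖ replaced by rₖ). Then for every n ≥ 1, the divided difference of the c-free Appell polynomial Aₙ satisfies ΔAₙ(x, y) = Σ_{k=0}^{n−1} Bₖ(x)·A_{n−1−k}(y) as an identity of two-variable polynomials. -/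
open Polynomial

/-- The one-variable free Appell polynomials: `B₀ = 1` and
`Bₙ₊₁ = x·Bₙ − Σ_{j=1}^{n+1} rⱼ·B_{n+1−j}`. -/
noncomputable def freeAppell (r : ℕ → ℂ) : ℕ → Polynomial ℂ
  | 0 => 1
  | n + 1 =>
      X * freeAppell r n
        - ∑ j ∈ Finset.range (n + 1), C (r (j + 1)) * freeAppell r (n - j)
  termination_by n => n
  decreasing_by all_goals omega

/-!
Write `G_s(a) = Σ Aₙ(a) zⁿ`, `R = Σ r_{j+1} z^j`, `S = Σ s_{j+1} z^j` and `P_a = 1 - z (a - R)`.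
The recursion says `G_s(a) · P_a = 1 + z (R - S)`, a right-hand side independent of `a`; since
`Bₙ = Aₙ` for `s = r`, the series of the `Bₙ(a)` is `P_a⁻¹`. Hence
`(G_s(x) - G_s(y)) · P_x = G_s(y) (P_y - P_x) = (x - y) z G_s(y)`, and multiplying by `P_x⁻¹` gives
`G_s(x) - G_s(y) = (x - y) z G_r(x) G_s(y)`, whose coefficient of `zⁿ` is the divided difference
identity. It holds with `x, y` in any commutative `ℂ`-algebra; in `ℂ[x, y]` one cancels `x - y`.
-/

theorem cfAppell_zero (r s : ℕ → ℂ) : cfAppell r s 0 = 1 := by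
  rw [cfAppell]

theorem cfAppell_succ (r s : ℕ → ℂ) (n : ℕ) :
    cfAppell r s (n + 1) = X * cfAppell r s n
      - ∑ j ∈ Finset.range n, C (r (j + 1)) * cfAppell r s (n - j) - C (s (n + 1)) := by
  rw [cfAppell]

theorem freeAppell_eq_cfAppell (r : ℕ → ℂ) : freeAppell r = cfAppell r r := by
  funext n
  induction n using Nat.strong_induction_on with
  | _ n ih =>
    cases n with
    | zero => rw [freeAppell, cfAppell_zero]
    | succ n =>
      -- the last term `r (n + 1) * B₀` of the free recursion plays the role of `s (n + 1)`
      rw [freeAppell, cfAppell_succ, Finset.sum_range_succ, ih n (by omega), Nat.sub_self,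
        ih 0 (by omega), cfAppell_zero, mul_one, sub_sub]
      congr 2
      refine Finset.sum_congr rfl fun j hj => ?_
      rw [ih (n - j) (by omega)]

section GeneratingFunction

variable {A : Type*} [CommRing A] [Algebra ℂ A]

noncomputable def cfAppellSeries (r s : ℕ → ℂ) (a : A) : PowerSeries A :=
  PowerSeries.mk fun n => aeval a (cfAppell r s n)

noncomputable def shiftedSeries (t : ℕ → ℂ) : PowerSeries A :=
  PowerSeries.mk fun j => algebraMap ℂ A (t (j + 1))

-- The c-free recursion omits the `A₀` term of the convolution, hence the factor `G - 1`.
theorem cfAppellSeries_eq (r s : ℕ → ℂ) (a : A) :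
    cfAppellSeries r s a = 1 + PowerSeries.X * (PowerSeries.C a * cfAppellSeries r s a
      - shiftedSeries r * (cfAppellSeries r s a - 1) - shiftedSeries s) := by
  ext n
  cases n with
  | zero => simp [cfAppellSeries, cfAppell_zero]
  | succ n =>
    rw [map_add, PowerSeries.coeff_succ_X_mul, map_sub, map_sub, PowerSeries.coeff_C_mul,
      PowerSeries.coeff_mul, Finset.Nat.sum_antidiagonal_eq_sum_range_succ
        (fun i j => PowerSeries.coeff i (shiftedSeries r) *
          PowerSeries.coeff j (cfAppellSeries r s a - 1)),
      Finset.sum_range_succ]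
    simp only [cfAppellSeries, shiftedSeries, PowerSeries.coeff_mk, cfAppell_succ, map_sub,
      map_sum, map_mul, aeval_X, aeval_C, PowerSeries.coeff_one]
    rw [Nat.sub_self, if_pos rfl, if_neg n.succ_ne_zero, cfAppell_zero, map_one, sub_self,
      mul_zero, add_zero]
    have hsum : ∀ j ∈ Finset.range n, algebraMap ℂ A (r (j + 1)) *
        (aeval a (cfAppell r s (n - j)) - if n - j = 0 then 1 else 0) =
        algebraMap ℂ A (r (j + 1)) * aeval a (cfAppell r s (n - j)) := fun j hj => by
      rw [if_neg (by have := Finset.mem_range.mp hj; omega), sub_zero]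
    rw [Finset.sum_congr rfl hsum]
    ring

theorem cfAppellSeries_mul (r s : ℕ → ℂ) (a : A) :
    cfAppellSeries r s a * (1 - PowerSeries.X * (PowerSeries.C a - shiftedSeries r)) =
      1 + PowerSeries.X * (shiftedSeries r - shiftedSeries s) := by
  linear_combination cfAppellSeries_eq r s a

theorem cfAppellSeries_sub (r s : ℕ → ℂ) (x y : A) :
    cfAppellSeries r s x - cfAppellSeries r s y =
      PowerSeries.C (x - y) * PowerSeries.X * (cfAppellSeries r r x * cfAppellSeries r s y) := by
  have hfree := cfAppellSeries_mul r r x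
  rw [sub_self, mul_zero, add_zero] at hfree
  rw [map_sub]
  linear_combination (cfAppellSeries r s y - cfAppellSeries r s x) * hfree +
    cfAppellSeries r r x * cfAppellSeries_mul r s x -
    cfAppellSeries r r x * cfAppellSeries_mul r s y

theorem aeval_cfAppell_sub (r s : ℕ → ℂ) (x y : A) (n : ℕ) :
    aeval x (cfAppell r s n) - aeval y (cfAppell r s n) =
      (x - y) * ∑ k ∈ Finset.range n,
        aeval x (freeAppell r k) * aeval y (cfAppell r s (n - 1 - k)) := by
  have h := congrArg (PowerSeries.coeff n) (cfAppellSeries_sub r s x y)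
  cases n with
  | zero => simpa [cfAppellSeries] using h
  | succ m =>
    rw [map_sub, mul_assoc, PowerSeries.coeff_C_mul, PowerSeries.coeff_succ_X_mul,
      PowerSeries.coeff_mul, Finset.Nat.sum_antidiagonal_eq_sum_range_succ
        (fun i j => PowerSeries.coeff i (cfAppellSeries r r x) *
          PowerSeries.coeff j (cfAppellSeries r s y))] at h
    simpa only [cfAppellSeries, PowerSeries.coeff_mk, freeAppell_eq_cfAppell,
      Nat.add_sub_cancel] using h

end GeneratingFunction

theorem cfAppell_divided_difference_general (r s : ℕ → ℂ) (n : ℕ)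
    (D : MvPolynomial (Fin 2) ℂ)
    (hD : (MvPolynomial.X 0 - MvPolynomial.X 1) * D =
      Polynomial.aeval (MvPolynomial.X 0) (cfAppell r s n)
        - Polynomial.aeval (MvPolynomial.X 1) (cfAppell r s n)) :
    D = ∑ k ∈ Finset.range n,
        Polynomial.aeval (MvPolynomial.X 0) (freeAppell r k) *
          Polynomial.aeval (MvPolynomial.X 1) (cfAppell r s (n - 1 - k)) := by
  have hX : (MvPolynomial.X 0 - MvPolynomial.X 1 : MvPolynomial (Fin 2) ℂ) ≠ 0 :=
    sub_ne_zero.mpr fun h => absurd (MvPolynomial.X_injective h) (by decide)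
  exact mul_left_cancel₀ hX (hD.trans (aeval_cfAppell_sub r s _ _ n))

/-- for `n ≥ 1`, the divided difference of the c-free Appell polynomial
`Aₙ` satisfies `ΔAₙ(x, y) = Σ_{k=0}^{n−1} Bₖ(x)·A_{n−1−k}(y)`, where `ΔAₙ` is the unique
two-variable polynomial with `Aₙ(x) − Aₙ(y) = (x − y)·ΔAₙ(x, y)`. -/
theorem cfAppell_divided_difference (r s : ℕ → ℂ) (n : ℕ) (hn : 1 ≤ n)
    (D : MvPolynomial (Fin 2) ℂ)
    (hD : (MvPolynomial.X 0 - MvPolynomial.X 1) * D =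
      Polynomial.aeval (MvPolynomial.X 0) (cfAppell r s n)
        - Polynomial.aeval (MvPolynomial.X 1) (cfAppell r s n)) :
    D = ∑ k ∈ Finset.range n,
        Polynomial.aeval (MvPolynomial.X 0) (freeAppell r k) *
          Polynomial.aeval (MvPolynomial.X 1) (cfAppell r s (n - 1 - k)) :=
  cfAppell_divided_difference_general r s n D hD
end

section
/- Let μ and ν be Borel probability measures on ℝ with finite moments of all orders, let (Pₙ) be a monic orthogonal polynomial system for μ with Jacobi parameters (βₙ)ₙ≥0, (γₙ)ₙ≥1 with all γₙ > 0, and let (Qₙ) be a monic orthogonal polynomial system for ν with Jacobi parameters (β′ₙ)ₙ≥0, (γ′ₙ)ₙ≥1 with all γ′ₙ > 0. Then the following are equivalent: (i) β₀ = 0, γ₁ = 1, βₙ = β′_{n−1} for all n ≥ 1, and γₙ = γ′_{n−1} for all n ≥ 2 (the Jacobi parameter sequences of μ are those of ν with 0 and 1 prepended); (ii) in the ring ℝ[[z]] of formal power series, (1 + Σ_{n≥1} (∫xⁿ dμ)·zⁿ) · (1 − z²·(1 + Σ_{n≥1} (∫xⁿ dν)·zⁿ)) = 1. -/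
/-!
Let `c(n, k)` (`jacobiCoeff`) be the weighted number of Motzkin paths of length `n` from height `0`
to height `k`. The three-term recurrence and orthogonality give `∫ xⁿ Pₖ dμ = γ₁ ⋯ γₖ · c(n, k)` by
induction on `n`, so the moments of `μ` are `c(n, 0)`. Cutting a path at its last visit to height
`0` gives the continued-fraction relation `M = 1 + z² M' M` whenever the parameters of `M` are
those of `M'` with `0, 1` prepended; this is (i) ⇒ (ii). Conversely, (ii) says that `μ` has the
moments of the prepended parameters, and a moment functional determines its monic orthogonal
polynomials (the `γₙ` being nonzero), hence its Jacobi parameters.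
-/

open MeasureTheory Polynomial

/-- A monic orthogonal polynomial system for `μ` with Jacobi parameters
`(βₙ)ₙ≥0`, `(γₙ)ₙ≥1`: monic polynomials `Pₙ` with `deg Pₙ = n`, `P₀ = 1`,
satisfying `x·Pₙ = Pₙ₊₁ + βₙ Pₙ + γₙ Pₙ₋₁` (with `P₋₁ = 0`) and
`∫ Pₙ Pₘ dμ = 0` for `n ≠ m`. -/
def IsMOPS (μ : Measure ℝ) (P : ℕ → Polynomial ℝ) (β γ : ℕ → ℝ) : Prop :=
  P 0 = 1 ∧ (∀ n, (P n).Monic) ∧ (∀ n, (P n).natDegree = n) ∧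
    (X * P 0 = P 1 + C (β 0) * P 0) ∧
    (∀ n, 1 ≤ n → X * P n = P (n + 1) + C (β n) * P n + C (γ n) * P (n - 1)) ∧
    (∀ n m, n ≠ m → ∫ x, (P n).eval x * (P m).eval x ∂μ = 0)

/-- The moment generating function `1 + Σ_{n≥1} (∫ xⁿ dμ) zⁿ` of a probability measure. -/
noncomputable def momentSeries (μ : Measure ℝ) : PowerSeries ℝ :=
  PowerSeries.mk fun n => ∫ x, x ^ n ∂μ

/-- The total weight of the Motzkin paths of length `n` from height `0` to height `k`, a level step
at height `k` weighing `b k` and a down step from height `k + 1` weighing `g (k + 1)`. -/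
noncomputable def jacobiCoeff (b g : ℕ → ℝ) : ℕ → ℕ → ℝ
  | 0, 0 => 1
  | 0, _ + 1 => 0
  | n + 1, 0 => b 0 * jacobiCoeff b g n 0 + g 1 * jacobiCoeff b g n 1
  | n + 1, k + 1 => jacobiCoeff b g n k + b (k + 1) * jacobiCoeff b g n (k + 1) +
      g (k + 2) * jacobiCoeff b g n (k + 2)

noncomputable def jacobiSeries (b g : ℕ → ℝ) : PowerSeries ℝ :=
  PowerSeries.mk fun n => jacobiCoeff b g n 0

section JacobiCoeff

open Finset

variable {b g b' g' : ℕ → ℝ}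

@[simp]
theorem jacobiCoeff_zero_zero : jacobiCoeff b g 0 0 = 1 := rfl

@[simp]
theorem jacobiCoeff_zero_succ (k : ℕ) : jacobiCoeff b g 0 (k + 1) = 0 := rfl

theorem jacobiCoeff_succ_zero (n : ℕ) :
    jacobiCoeff b g (n + 1) 0 = b 0 * jacobiCoeff b g n 0 + g 1 * jacobiCoeff b g n 1 := rfl

theorem jacobiCoeff_succ_succ (n k : ℕ) :
    jacobiCoeff b g (n + 1) (k + 1) = jacobiCoeff b g n k +
      b (k + 1) * jacobiCoeff b g n (k + 1) + g (k + 2) * jacobiCoeff b g n (k + 2) := rfl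

theorem jacobiCoeff_eq_zero_of_lt {n k : ℕ} (h : n < k) : jacobiCoeff b g n k = 0 := by
  induction n generalizing k with
  | zero => obtain ⟨k, rfl⟩ : ∃ k', k = k' + 1 := ⟨k - 1, by omega⟩; rfl
  | succ n ih =>
    obtain ⟨k, rfl⟩ : ∃ k', k = k' + 1 := ⟨k - 1, by omega⟩
    rw [jacobiCoeff_succ_succ, ih (by omega), ih (by omega), ih (by omega)]
    ring

theorem jacobiCoeff_self (n : ℕ) : jacobiCoeff b g n n = 1 := by
  induction n with
  | zero => rfl
  | succ n ih =>
    rw [jacobiCoeff_succ_succ, ih, jacobiCoeff_eq_zero_of_lt (by omega),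
      jacobiCoeff_eq_zero_of_lt (by omega)]
    ring

/-- Splitting a path at its last visit to height `0`: what follows is a path staying at height
`≥ 1`, i.e. a path for the shifted parameters. -/
theorem jacobiCoeff_succ_succ_eq_sum (hb : ∀ k, b (k + 1) = b' k) (hg : ∀ k, g (k + 2) = g' (k + 1))
    (n k : ℕ) :
    jacobiCoeff b g (n + 1) (k + 1) =
      ∑ p ∈ antidiagonal n, jacobiCoeff b' g' p.1 k * jacobiCoeff b g p.2 0 := by
  induction n generalizing k with
  | zero => cases k <;> simp [jacobiCoeff_succ_succ]
  | succ n ih =>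
    rw [Nat.sum_antidiagonal_succ, jacobiCoeff_succ_succ, hb, hg]
    cases k with
    | zero =>
      simp only [jacobiCoeff_succ_zero (b := b'), jacobiCoeff_zero_zero, add_mul, mul_assoc,
        sum_add_distrib, ← mul_sum, ← ih]
      ring
    | succ k =>
      simp only [jacobiCoeff_succ_succ (b := b'), jacobiCoeff_zero_succ, add_mul, mul_assoc,
        sum_add_distrib, ← mul_sum, ← ih]
      ring

theorem jacobiSeries_mul_one_sub_X_sq_mul (hb0 : b 0 = 0) (hg1 : g 1 = 1)
    (hb : ∀ k, b (k + 1) = b' k) (hg : ∀ k, g (k + 2) = g' (k + 1)) :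
    jacobiSeries b g * (1 - PowerSeries.X ^ 2 * jacobiSeries b' g') = 1 := by
  suffices h : jacobiSeries b g =
      1 + PowerSeries.X ^ 2 * (jacobiSeries b' g' * jacobiSeries b g) by
    linear_combination h
  ext (_ | _ | n)
  · simp [jacobiSeries]
  · simp [jacobiSeries, jacobiCoeff_succ_zero, hb0, PowerSeries.coeff_X_pow_mul']
  · rw [map_add, show n + 1 + 1 = n + 2 from rfl, PowerSeries.coeff_X_pow_mul,
      PowerSeries.coeff_mul]
    simp [jacobiSeries, jacobiCoeff_succ_zero, hb0, hg1, jacobiCoeff_succ_succ_eq_sum hb hg]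

end JacobiCoeff

noncomputable def jacobiPoly (b g : ℕ → ℝ) : ℕ → ℝ[X]
  | 0 => 1
  | 1 => X - C (b 0)
  | k + 2 => (X - C (b (k + 1))) * jacobiPoly b g (k + 1) - C (g (k + 1)) * jacobiPoly b g k

section JacobiPoly

variable {b g b' g' : ℕ → ℝ}

theorem X_mul_jacobiPoly_zero :
    X * jacobiPoly b g 0 = jacobiPoly b g 1 + C (b 0) * jacobiPoly b g 0 := by
  simp [jacobiPoly]

theorem X_mul_jacobiPoly_succ (k : ℕ) :
    X * jacobiPoly b g (k + 1) = jacobiPoly b g (k + 2) + C (b (k + 1)) * jacobiPoly b g (k + 1) +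
      C (g (k + 1)) * jacobiPoly b g k := by
  rw [jacobiPoly]
  ring

theorem eq_jacobiPoly {P : ℕ → ℝ[X]} (h0 : P 0 = 1) (h1 : X * P 0 = P 1 + C (b 0) * P 0)
    (hrec : ∀ n, 1 ≤ n → X * P n = P (n + 1) + C (b n) * P n + C (g n) * P (n - 1)) :
    P = jacobiPoly b g := by
  funext k
  induction k using Nat.twoStepInduction with
  | zero => exact h0
  | one => rw [jacobiPoly]; linear_combination (-1 : ℝ[X]) * h1 + (X - C (b 0)) * h0
  | more k ih ih' =>
    have h := hrec (k + 1) (by omega)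
    rw [Nat.add_sub_cancel] at h
    rw [jacobiPoly, ← ih, ← ih']
    linear_combination (-1 : ℝ[X]) * h

theorem jacobiPoly_monic_natDegree (b g : ℕ → ℝ) (k : ℕ) :
    (jacobiPoly b g k).Monic ∧ (jacobiPoly b g k).natDegree = k := by
  induction k using Nat.twoStepInduction with
  | zero => exact ⟨monic_one, natDegree_one⟩
  | one => exact ⟨monic_X_sub_C _, natDegree_X_sub_C _⟩
  | more k ih ih' =>
    have hlead : ((X - C (b (k + 1))) * jacobiPoly b g (k + 1)).natDegree = k + 2 := by
      rw [(monic_X_sub_C _).natDegree_mul ih'.1, natDegree_X_sub_C, ih'.2]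
      ring
    have hlow : (C (g (k + 1)) * jacobiPoly b g k).natDegree < k + 2 :=
      (natDegree_C_mul_le _ _).trans_lt (by omega)
    rw [← hlead] at hlow
    refine ⟨((monic_X_sub_C _).mul ih'.1).sub_of_left (degree_lt_degree hlow), ?_⟩
    rw [jacobiPoly, natDegree_sub_eq_left_of_natDegree_lt hlow, hlead]

theorem coeff_X_mul_jacobiPoly_sub_jacobiPoly_succ (b g : ℕ → ℝ) (k : ℕ) :
    (X * jacobiPoly b g k - jacobiPoly b g (k + 1)).coeff k = b k := by
  cases k with
  | zero => simp [jacobiPoly]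
  | succ k =>
    obtain ⟨hmonic, hdeg⟩ := jacobiPoly_monic_natDegree b g (k + 1)
    have hlead : (jacobiPoly b g (k + 1)).coeff (k + 1) = 1 := by
      simpa [hdeg] using hmonic.coeff_natDegree
    rw [X_mul_jacobiPoly_succ, add_assoc, add_sub_cancel_left, coeff_add, coeff_C_mul, coeff_C_mul,
      hlead,
      coeff_eq_zero_of_natDegree_lt (by rw [(jacobiPoly_monic_natDegree b g k).2]; omega)]
    ring

theorem eq_of_jacobiPoly_eq (h : jacobiPoly b g = jacobiPoly b' g') :
    b = b' ∧ ∀ n, g (n + 1) = g' (n + 1) := by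
  obtain rfl : b = b' := funext fun k => by
    rw [← coeff_X_mul_jacobiPoly_sub_jacobiPoly_succ b g, h,
      coeff_X_mul_jacobiPoly_sub_jacobiPoly_succ]
  refine ⟨rfl, fun n => C_injective (mul_right_cancel₀
    (jacobiPoly_monic_natDegree b g' n).1.ne_zero ?_)⟩
  have h1 := X_mul_jacobiPoly_succ (b := b) (g := g) n
  rw [h, X_mul_jacobiPoly_succ] at h1
  linear_combination -h1

end JacobiPoly

section MomentFunctional

open Finset

variable {b g b' g' : ℕ → ℝ} (L : ℝ[X] →ₗ[ℝ] ℝ)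

theorem map_X_pow_mul_jacobiPoly (hL : ∀ n, L (X ^ n) = jacobiCoeff b g n 0) (n k : ℕ) :
    L (X ^ n * jacobiPoly b g k) = (∏ i ∈ range k, g (i + 1)) * jacobiCoeff b g n k := by
  induction k using Nat.twoStepInduction generalizing n with
  | zero => simp [jacobiPoly, hL]
  | one =>
    have h : X ^ n * jacobiPoly b g 1 = X ^ (n + 1) - b 0 • X ^ n := by
      rw [jacobiPoly, smul_eq_C_mul]
      ring
    rw [h, map_sub, map_smul, hL, hL, jacobiCoeff_succ_zero, smul_eq_mul]
    simp
  | more k ih ih' =>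
    have h : X ^ n * jacobiPoly b g (k + 2) = X ^ (n + 1) * jacobiPoly b g (k + 1) -
        b (k + 1) • (X ^ n * jacobiPoly b g (k + 1)) - g (k + 1) • (X ^ n * jacobiPoly b g k) := by
      rw [jacobiPoly, smul_eq_C_mul, smul_eq_C_mul]
      ring
    rw [h, map_sub, map_sub, map_smul, map_smul, ih, ih', ih', jacobiCoeff_succ_succ]
    simp only [prod_range_succ, smul_eq_mul]
    ring

theorem map_X_pow_eq_jacobiCoeff (h0 : L 1 = 1) (h : ∀ k, L (jacobiPoly b g (k + 1)) = 0)
    (n : ℕ) : L (X ^ n) = jacobiCoeff b g n 0 := by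
  suffices key : ∀ n k,
      L (X ^ n * jacobiPoly b g k) = (∏ i ∈ range k, g (i + 1)) * jacobiCoeff b g n k by
    simpa [jacobiPoly] using key n 0
  intro n
  induction n with
  | zero => rintro (_ | k) <;> simp [jacobiPoly, h0, h]
  | succ n ih =>
    rintro (_ | k)
    · rw [pow_succ, mul_assoc, X_mul_jacobiPoly_zero, ← smul_eq_C_mul, mul_add, mul_smul_comm,
        map_add, map_smul, ih, ih, jacobiCoeff_succ_zero]
      simp only [prod_range_succ, prod_range_zero, smul_eq_mul]
      ring
    · rw [pow_succ, mul_assoc, X_mul_jacobiPoly_succ, ← smul_eq_C_mul, ← smul_eq_C_mul, mul_add,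
        mul_add, mul_smul_comm, mul_smul_comm, map_add, map_add, map_smul, map_smul, ih, ih, ih,
        jacobiCoeff_succ_succ]
      simp only [prod_range_succ, smul_eq_mul]
      ring

theorem map_mul_jacobiPoly_of_natDegree_le (hL : ∀ n, L (X ^ n) = jacobiCoeff b g n 0)
    {p : ℝ[X]} {k : ℕ} (hp : p.natDegree ≤ k) :
    L (p * jacobiPoly b g k) = p.coeff k * ∏ i ∈ range k, g (i + 1) := by
  have hterm : ∀ i, L (monomial i (p.coeff i) * jacobiPoly b g k) =
      p.coeff i * ((∏ i ∈ range k, g (i + 1)) * jacobiCoeff b g i k) := fun i => by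
    rw [← C_mul_X_pow_eq_monomial, mul_assoc, ← smul_eq_C_mul, map_smul,
      map_X_pow_mul_jacobiPoly L hL, smul_eq_mul]
  conv_lhs => rw [p.as_sum_range' (k + 1) (by omega)]
  rw [sum_mul, map_sum, sum_range_succ, sum_eq_zero fun i hi => by
    rw [hterm, jacobiCoeff_eq_zero_of_lt (mem_range.1 hi), mul_zero, mul_zero], hterm,
    jacobiCoeff_self]
  ring

/-- The monic orthogonal polynomials of a moment functional are unique: `Pₖ - P'ₖ` has degree
`d < k`, and pairing it with `P_d` gives its leading coefficient times a nonzero norm, but also `0`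
by orthogonality of `P_d` to both `Pₖ` and `P'ₖ`. -/
theorem jacobiPoly_eq_of_moments (hg : ∀ n, g (n + 1) ≠ 0)
    (hL : ∀ n, L (X ^ n) = jacobiCoeff b g n 0) (hL' : ∀ n, L (X ^ n) = jacobiCoeff b' g' n 0) :
    jacobiPoly b g = jacobiPoly b' g' := by
  funext k
  obtain ⟨hmon, hdeg⟩ := jacobiPoly_monic_natDegree b g k
  obtain ⟨hmon', hdeg'⟩ := jacobiPoly_monic_natDegree b' g' k
  by_contra hne
  set D := jacobiPoly b g k - jacobiPoly b' g' k
  have hD : D ≠ 0 := sub_ne_zero.2 hne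
  have hDdeg : D.natDegree < k := by
    have h := degree_sub_lt_left (p := jacobiPoly b g k) (q := jacobiPoly b' g' k)
      (by rw [degree_eq_natDegree hmon.ne_zero, degree_eq_natDegree hmon'.ne_zero, hdeg, hdeg'])
      hmon.ne_zero (by rw [hmon.leadingCoeff, hmon'.leadingCoeff])
    simpa [hdeg] using natDegree_lt_natDegree hD h
  set d := D.natDegree
  have hJd : (jacobiPoly b g d).natDegree < k := by
    rwa [(jacobiPoly_monic_natDegree b g d).2]
  have hpair : L (D * jacobiPoly b g d) = 0 := by
    rw [sub_mul, map_sub, mul_comm, map_mul_jacobiPoly_of_natDegree_le L hL hJd.le,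
      mul_comm (jacobiPoly b' g' k), map_mul_jacobiPoly_of_natDegree_le L hL' hJd.le,
      coeff_eq_zero_of_natDegree_lt hJd]
    ring
  rw [map_mul_jacobiPoly_of_natDegree_le L hL le_rfl] at hpair
  exact mul_ne_zero (leadingCoeff_ne_zero.2 hD) (prod_ne_zero_iff.2 fun i _ => hg i) hpair

end MomentFunctional

noncomputable def momentFunctional (m : ℕ → ℝ) : ℝ[X] →ₗ[ℝ] ℝ :=
  lsum fun n => m n • LinearMap.id

@[simp]
theorem momentFunctional_X_pow (m : ℕ → ℝ) (n : ℕ) : momentFunctional m (X ^ n) = m n := by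
  simp [momentFunctional, ← monomial_one_right_eq_X_pow, sum_monomial_index]

theorem integral_eval_eq_momentFunctional {μ : Measure ℝ}
    (hμ : ∀ n : ℕ, Integrable (fun x => x ^ n) μ) (p : ℝ[X]) :
    ∫ x, p.eval x ∂μ = momentFunctional (fun n => ∫ x, x ^ n ∂μ) p := by
  simp only [momentFunctional, lsum_apply, eval_eq_sum, sum_def]
  rw [integral_finsetSum _ fun n _ => (hμ n).const_mul _]
  refine Finset.sum_congr rfl fun n _ => ?_
  simp only [LinearMap.smul_apply, LinearMap.id_apply, smul_eq_mul]
  rw [integral_const_mul, mul_comm]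

theorem eq_of_jacobiSeries_eq {b g b' g' : ℕ → ℝ} (hg : ∀ n, g (n + 1) ≠ 0)
    (h : jacobiSeries b g = jacobiSeries b' g') : b = b' ∧ ∀ n, g (n + 1) = g' (n + 1) := by
  refine eq_of_jacobiPoly_eq (jacobiPoly_eq_of_moments
    (momentFunctional fun n => jacobiCoeff b g n 0) hg (momentFunctional_X_pow _) fun n => ?_)
  simpa [jacobiSeries] using congrArg (PowerSeries.coeff n) h

theorem momentSeries_eq_jacobiSeries {μ : Measure ℝ} [IsProbabilityMeasure μ]
    (hμ : ∀ n : ℕ, Integrable (fun x => x ^ n) μ) {P : ℕ → ℝ[X]} {b g : ℕ → ℝ}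
    (hP : IsMOPS μ P b g) : momentSeries μ = jacobiSeries b g := by
  obtain ⟨h0, -, -, h1, hrec, horth⟩ := hP
  obtain rfl := eq_jacobiPoly h0 h1 hrec
  set L := momentFunctional fun n => ∫ x, x ^ n ∂μ
  have hL (p : ℝ[X]) : L p = ∫ x, p.eval x ∂μ := (integral_eval_eq_momentFunctional hμ p).symm
  have hmoment := map_X_pow_eq_jacobiCoeff L (by simp [hL])
    fun k => by simpa [hL, jacobiPoly] using horth (k + 1) 0 k.succ_ne_zero
  ext n
  simpa [momentSeries, jacobiSeries, hL] using hmoment n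

theorem jacobi_shift_iff_moment_series_general (μ ν : Measure ℝ)
    [IsProbabilityMeasure μ] [IsProbabilityMeasure ν]
    (hμmom : ∀ n : ℕ, Integrable (fun x => x ^ n) μ)
    (hνmom : ∀ n : ℕ, Integrable (fun x => x ^ n) ν)
    (P Q : ℕ → Polynomial ℝ) (β γ β' γ' : ℕ → ℝ)
    (hP : IsMOPS μ P β γ) (hQ : IsMOPS ν Q β' γ')
    (hγpos : ∀ n, 1 ≤ n → 0 < γ n) :
    (β 0 = 0 ∧ γ 1 = 1 ∧ (∀ n, 1 ≤ n → β n = β' (n - 1)) ∧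
        (∀ n, 2 ≤ n → γ n = γ' (n - 1)))
      ↔ momentSeries μ * (1 - PowerSeries.X ^ 2 * momentSeries ν) = 1 := by
  rw [momentSeries_eq_jacobiSeries hμmom hP, momentSeries_eq_jacobiSeries hνmom hQ]
  constructor
  · rintro ⟨hb0, hg1, hb, hg⟩
    exact jacobiSeries_mul_one_sub_X_sq_mul hb0 hg1 (fun n => hb (n + 1) n.succ_pos)
      (fun n => hg (n + 2) (by omega))
  · intro h
    let b : ℕ → ℝ := fun | 0 => 0 | n + 1 => β' n
    let g : ℕ → ℝ := fun | n + 2 => γ' (n + 1) | _ => 1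
    have hbg : jacobiSeries b g * (1 - PowerSeries.X ^ 2 * jacobiSeries β' γ') = 1 :=
      jacobiSeries_mul_one_sub_X_sq_mul rfl rfl (fun _ => rfl) (fun _ => rfl)
    obtain ⟨rfl, hγ⟩ := eq_of_jacobiSeries_eq (fun n => (hγpos (n + 1) n.succ_pos).ne')
      (left_inv_eq_right_inv h (by rwa [mul_comm]))
    refine ⟨rfl, hγ 0, fun n hn => ?_, fun n hn => ?_⟩
    · obtain ⟨m, rfl⟩ := Nat.exists_eq_add_of_le' hn
      rfl
    · obtain ⟨m, rfl⟩ := Nat.exists_eq_add_of_le' hn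
      exact hγ (m + 1)

/-- for probability measures `μ, ν` on `ℝ` with finite moments and monic
orthogonal polynomial systems with Jacobi parameters `(β, γ)` and `(β', γ')` (all `γ`'s
positive), the Jacobi parameters of `μ` are those of `ν` with `0` and `1` prepended iff
`M^μ(z) · (1 − z² · M^ν(z)) = 1` in `ℝ[[z]]`. -/
theorem jacobi_shift_iff_moment_series (μ ν : Measure ℝ)
    [IsProbabilityMeasure μ] [IsProbabilityMeasure ν]
    (hμmom : ∀ n : ℕ, Integrable (fun x => x ^ n) μ)
    (hνmom : ∀ n : ℕ, Integrable (fun x => x ^ n) ν)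
    (P Q : ℕ → Polynomial ℝ) (β γ β' γ' : ℕ → ℝ)
    (hP : IsMOPS μ P β γ) (hQ : IsMOPS ν Q β' γ')
    (hγpos : ∀ n, 1 ≤ n → 0 < γ n) (hγ'pos : ∀ n, 1 ≤ n → 0 < γ' n) :
    (β 0 = 0 ∧ γ 1 = 1 ∧ (∀ n, 1 ≤ n → β n = β' (n - 1)) ∧
        (∀ n, 2 ≤ n → γ n = γ' (n - 1)))
      ↔ momentSeries μ * (1 - PowerSeries.X ^ 2 * momentSeries ν) = 1 :=
  jacobi_shift_iff_moment_series_general μ ν hμmom hνmom P Q β γ β' γ' hP hQ hγpos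
end

section
/- Let μ_sc be the standard semicircle distribution, i.e., the measure on ℝ with density y ↦ (1/(2π))·√(4 − y²) on [−2, 2] (and 0 elsewhere) with respect to Lebesgue measure, and let Ũₙ be the monic Chebyshev polynomials of the second kind, defined by Ũ₀ = 1, Ũ₁ = x, Ũₙ₊₁ = x·Ũₙ − Ũₙ₋₁. Then for every n ≥ 1 and every x ∈ ℝ, ∫ ΔŨₙ(x, y) dμ_sc(y) = Ũ_{n−1}(x); that is, the Chebyshev polynomials of the second kind are associated to themselves. -/
open MeasureTheory Polynomial

/-- The standard semicircle distribution: the measure on `ℝ` with density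
`y ↦ (1/(2π))·√(4 − y²)` on `[−2, 2]` (and `0` elsewhere) w.r.t. Lebesgue measure. -/
noncomputable def semicircleMeasure : Measure ℝ :=
  volume.withDensity fun y =>
    ENNReal.ofReal
      (Set.indicator (Set.Icc (-2 : ℝ) 2)
        (fun y => (1 / (2 * Real.pi)) * Real.sqrt (4 - y ^ 2)) y)

/-!
With `Ũₙ = S n` (Mathlib's `Polynomial.Chebyshev.S`), the three-term recurrence in both variables
makes `(a - b) · ∑_{i+j=m} S_i(a) S_j(b)` telescope to `S_{m+1}(a) - S_{m+1}(b)`, so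
`ΔŨ_{m+1}(x, y) = ∑_{i+j=m} Ũ_i(x) Ũ_j(y)`. Under `y = 2 cos θ` the semicircle law becomes
`(2/π) sin² θ dθ` on `[0, π]`, and `Ũ_j(2 cos θ) sin θ = sin((j+1)θ)`; orthogonality of the sines
gives `∫ Ũ_j dμ_sc = δ_{j0}`, so only the term `Ũ_m(x)` survives.
-/

open Real Finset Polynomial.Chebyshev

noncomputable def semicircleDensity (y : ℝ) : ℝ := 1 / (2 * π) * √(4 - y ^ 2)

theorem semicircleDensity_nonneg (y : ℝ) : 0 ≤ semicircleDensity y := by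
  unfold semicircleDensity; positivity

theorem continuous_semicircleDensity : Continuous semicircleDensity := by
  unfold semicircleDensity; fun_prop

theorem measurable_toNNReal_indicator_semicircleDensity :
    Measurable fun y => ((Set.Icc (-2) 2).indicator semicircleDensity y).toNNReal :=
  (continuous_semicircleDensity.measurable.indicator measurableSet_Icc).real_toNNReal

theorem semicircleMeasure_eq_withDensity_toNNReal :
    semicircleMeasure =
      volume.withDensity fun y => ((Set.Icc (-2) 2).indicator semicircleDensity y).toNNReal :=
  rfl

theorem toNNReal_indicator_semicircleDensity_smul (f : ℝ → ℝ) (y : ℝ) :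
    ((Set.Icc (-2) 2).indicator semicircleDensity y).toNNReal • f y =
      (Set.Icc (-2) 2).indicator (fun y => f y * semicircleDensity y) y := by
  by_cases hy : y ∈ Set.Icc (-2 : ℝ) 2
  · simp [hy, NNReal.smul_def, semicircleDensity_nonneg, mul_comm]
  · simp [hy]

theorem integral_semicircleMeasure (f : ℝ → ℝ) :
    ∫ y, f y ∂semicircleMeasure = ∫ y in -2..2, f y * semicircleDensity y := by
  rw [semicircleMeasure_eq_withDensity_toNNReal,
    integral_withDensity_eq_integral_smul measurable_toNNReal_indicator_semicircleDensity,
    intervalIntegral.integral_of_le (by norm_num),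
    ← integral_Icc_eq_integral_Ioc, ← integral_indicator measurableSet_Icc]
  simp_rw [toNNReal_indicator_semicircleDensity_smul]

theorem integrable_semicircleMeasure {f : ℝ → ℝ} (hf : ContinuousOn f (Set.Icc (-2) 2)) :
    Integrable f semicircleMeasure := by
  rw [semicircleMeasure_eq_withDensity_toNNReal,
    integrable_withDensity_iff_integrable_smul measurable_toNNReal_indicator_semicircleDensity]
  simp_rw [toNNReal_indicator_semicircleDensity_smul]
  rw [integrable_indicator_iff measurableSet_Icc]
  exact (hf.mul continuous_semicircleDensity.continuousOn).integrableOn_compact isCompact_Icc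

theorem semicircleDensity_two_mul_cos {θ : ℝ} (hθ : θ ∈ Set.Icc 0 π) :
    semicircleDensity (2 * cos θ) = sin θ / π := by
  have hsin : 0 ≤ sin θ := sin_nonneg_of_nonneg_of_le_pi hθ.1 hθ.2
  have hsq : 4 - (2 * cos θ) ^ 2 = (2 * sin θ) ^ 2 := by
    linear_combination (-4) * sin_sq_add_cos_sq θ
  rw [semicircleDensity, hsq, sqrt_sq (by positivity)]
  field_simp

theorem integral_semicircleMeasure_eq_integral_cos {f : ℝ → ℝ} (hf : Continuous f) :
    ∫ y, f y ∂semicircleMeasure = 2 / π * ∫ θ in 0..π, f (2 * cos θ) * sin θ ^ 2 := by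
  have hderiv : ∀ θ ∈ Set.uIcc 0 π, HasDerivAt (fun θ => 2 * cos θ) (-(2 * sin θ)) θ :=
    fun θ _ => by simpa using (hasDerivAt_cos θ).const_mul 2
  have hsubst := intervalIntegral.integral_comp_mul_deriv hderiv (by fun_prop)
    (g := fun y => f y * semicircleDensity y) (hf.mul continuous_semicircleDensity)
  simp only [Function.comp_apply, cos_zero, cos_pi, mul_one, mul_neg] at hsubst
  rw [integral_semicircleMeasure, intervalIntegral.integral_symm, ← hsubst,
    ← intervalIntegral.integral_neg, ← intervalIntegral.integral_const_mul]
  refine intervalIntegral.integral_congr fun θ hθ => ?_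
  rw [Set.uIcc_of_le pi_pos.le] at hθ
  rw [semicircleDensity_two_mul_cos hθ]
  field_simp

theorem integral_cos_nat_mul (k : ℕ) :
    ∫ θ in 0..π, cos (k * θ) = if k = 0 then π else 0 := by
  rcases Nat.eq_zero_or_pos k with rfl | hk
  · simp
  · rw [if_neg hk.ne', intervalIntegral.integral_comp_mul_left _ (by positivity), integral_cos]
    simp [sin_nat_mul_pi]

theorem integral_sin_succ_mul_mul_sin (m : ℕ) :
    ∫ θ in 0..π, sin ((m + 1) * θ) * sin θ = if m = 0 then π / 2 else 0 := by
  have hprod : ∀ θ : ℝ, sin ((m + 1) * θ) * sin θ = (cos (m * θ) - cos ((m + 2) * θ)) / 2 := by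
    intro θ
    rw [show (m : ℝ) * θ = (m + 1) * θ - θ by ring,
      show ((m : ℝ) + 2) * θ = (m + 1) * θ + θ by ring, cos_sub, cos_add]
    ring
  have hcos := integral_cos_nat_mul (m + 2)
  push_cast at hcos
  simp_rw [hprod]
  rw [intervalIntegral.integral_div, intervalIntegral.integral_sub
    ((by fun_prop : Continuous _).intervalIntegrable _ _)
    ((by fun_prop : Continuous _).intervalIntegrable _ _),
    integral_cos_nat_mul, hcos]
  split_ifs <;> simp_all

theorem integral_eval_S_semicircleMeasure (m : ℕ) :
    ∫ y, (S ℝ m).eval y ∂semicircleMeasure = if m = 0 then 1 else 0 := by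
  have hS : ∀ θ, (S ℝ m).eval (2 * cos θ) * sin θ ^ 2 = sin ((m + 1) * θ) * sin θ := fun θ => by
    rw [pow_two, ← mul_assoc, S_two_mul_real_cos]
    push_cast; rfl
  rw [integral_semicircleMeasure_eq_integral_cos (S ℝ m).continuous]
  simp_rw [hS]
  rw [integral_sin_succ_mul_mul_sin]
  split_ifs
  · field_simp
  · simp

theorem aeval_S_add_one {R A : Type*} [CommRing R] [Ring A] [Algebra R A] (a : A) (k : ℤ) :
    aeval a (S R (k + 1)) = a * aeval a (S R k) - aeval a (S R (k - 1)) := by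
  simp [S_add_one]

theorem sub_mul_sum_antidiagonal_aeval_S {R A : Type*} [CommRing R] [CommRing A] [Algebra R A]
    (a b : A) (n : ℕ) :
    (a - b) * ∑ p ∈ antidiagonal n, aeval a (S R p.1) * aeval b (S R p.2) =
      aeval a (S R (n + 1)) - aeval b (S R (n + 1)) := by
  set G : ℤ → A := fun k =>
    aeval a (S R k) * aeval b (S R (n + 1 - k)) - aeval a (S R (k - 1)) * aeval b (S R (n - k))
  have hstep : ∀ i : ℤ, (a - b) * (aeval a (S R i) * aeval b (S R (n - i))) = G (i + 1) - G i := by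
    intro i
    have ha := aeval_S_add_one (R := R) a i
    have hb := aeval_S_add_one (R := R) b (n - i)
    simp only [G]
    rw [show (n : ℤ) + 1 - (i + 1) = n - i by ring, show (n : ℤ) - (i + 1) = n - i - 1 by ring,
      show (n : ℤ) + 1 - i = n - i + 1 by ring, show i + 1 - 1 = i by ring, ha, hb]
    ring
  calc (a - b) * ∑ p ∈ antidiagonal n, aeval a (S R p.1) * aeval b (S R p.2)
      = ∑ p ∈ antidiagonal n, (G (p.1 + 1) - G p.1) := by
        rw [mul_sum]
        refine sum_congr rfl fun p hp => ?_
        have hp2 : ((p.2 : ℕ) : ℤ) = n - p.1 := by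
          rw [← mem_antidiagonal.1 hp]; push_cast; ring
        rw [← hstep, hp2]
    _ = ∑ k ∈ range (n + 1), (G (k + 1) - G k) :=
        Finset.Nat.sum_antidiagonal_eq_sum_range_succ (fun i _ => G (i + 1) - G i) n
    _ = aeval a (S R (n + 1)) - aeval b (S R (n + 1)) := by
        have htelescope := sum_range_sub (fun k : ℕ => G k) (n + 1)
        push_cast at htelescope
        rw [htelescope]
        simp [G]

theorem eq_S_of_recurrence {R : Type*} [CommRing R] (U : ℕ → R[X]) (h0 : U 0 = 1) (h1 : U 1 = X)
    (hrec : ∀ n, U (n + 2) = X * U (n + 1) - U n) (n : ℕ) : U n = S R n := by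
  induction n using Nat.twoStepInduction with
  | zero => simp [h0]
  | one => simp [h1]
  | more n ih ih' =>
    rw [hrec, ih, ih']
    push_cast
    exact (S_add_two R n).symm

theorem MvPolynomial.eval_aeval_X {R σ : Type*} [CommSemiring R] (v : σ → R) (i : σ) (p : R[X]) :
    eval v (Polynomial.aeval (X i) p) = p.eval (v i) := by
  simpa using (Polynomial.aeval_algHom_apply (aeval v) (X i) p).symm

/-- the monic Chebyshev polynomials of the second kind
(`Ũ₀ = 1`, `Ũ₁ = x`, `Ũₙ₊₁ = x·Ũₙ − Ũₙ₋₁`) are associated to themselves: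
`∫ ΔŨₙ(x, y) dμ_sc(y) = Ũ_{n−1}(x)` for every `n ≥ 1`, where `ΔŨₙ` is the unique
two-variable polynomial with `Ũₙ(x) − Ũₙ(y) = (x − y)·ΔŨₙ(x, y)`. -/
theorem chebyshevU_associated_to_itself (U : ℕ → Polynomial ℝ)
    (hU0 : U 0 = 1) (hU1 : U 1 = X)
    (hUrec : ∀ n, U (n + 2) = X * U (n + 1) - U n)
    (n : ℕ) (hn : 1 ≤ n) (x : ℝ)
    (D : MvPolynomial (Fin 2) ℝ)
    (hD : (MvPolynomial.X 0 - MvPolynomial.X 1) * D =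
      Polynomial.aeval (MvPolynomial.X 0) (U n) - Polynomial.aeval (MvPolynomial.X 1) (U n)) :
    ∫ y, MvPolynomial.eval ![x, y] D ∂semicircleMeasure = (U (n - 1)).eval x := by
  obtain ⟨m, rfl⟩ : ∃ m, n = m + 1 := ⟨n - 1, by omega⟩
  have hUS := eq_S_of_recurrence U hU0 hU1 hUrec
  have hD_eq : D = ∑ p ∈ antidiagonal m,
      aeval (MvPolynomial.X 0) (S ℝ p.1) * aeval (MvPolynomial.X 1) (S ℝ p.2) := by
    have hX : (MvPolynomial.X 0 - MvPolynomial.X 1 : MvPolynomial (Fin 2) ℝ) ≠ 0 :=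
      sub_ne_zero.2 (MvPolynomial.X_injective.ne (show (0 : Fin 2) ≠ 1 by decide))
    refine mul_left_cancel₀ hX ?_
    rw [hD, sub_mul_sum_antidiagonal_aeval_S, hUS]
    push_cast
    rfl
  simp only [hD_eq, map_sum, map_mul, MvPolynomial.eval_aeval_X, Matrix.cons_val_zero,
    Matrix.cons_val_one]
  rw [integral_finsetSum _ fun p _ => (integrable_semicircleMeasure (by fun_prop)).const_mul _]
  simp only [integral_const_mul, integral_eval_S_semicircleMeasure, mul_ite, mul_one, mul_zero]
  rw [sum_eq_single_of_mem (m, 0) (by simp), if_pos rfl, add_tsub_cancel_right, hUS]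
  rintro ⟨i, j⟩ hij hne
  rw [HasAntidiagonal.mem_antidiagonal] at hij
  have hj : j ≠ 0 := by rintro rfl; exact hne (by simp [← hij])
  simp [hj]
end

section
/- Let μ be a Borel probability measure on ℝ with finite moments of all orders and (Pₙ) a monic orthogonal polynomial system for μ with Jacobi parameters (βₙ)ₙ≥0, (γₙ)ₙ≥1. If for every n ≥ 1 and every x ∈ ℝ one has ∫ ΔPₙ(x, y) dμ(y) = P_{n−1}(x), then the Jacobi parameter sequences are constant: βₙ = β₀ for all n ≥ 0 and γₙ = γ₁ for all n ≥ 1. (In particular, if μ has mean 0 and variance 1, then βₙ = 0 and γₙ = 1 for all n, so the Pₙ are the monic Chebyshev polynomials of the second kind: the semicircle law is the unique fixed point.) -/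
open MeasureTheory Polynomial

/-!
The recurrence `X Pₖ = Pₖ₊₁ + βₖ Pₖ + γₖ Pₖ₋₁` passes to divided differences as
`ΔPₖ₊₁(x, y) = Pₖ(y) + (x − βₖ) ΔPₖ(x, y) − γₖ ΔPₖ₋₁(x, y)`. Integrating in `y`, and using
`∫ Pₖ dμ = 0` for `k ≥ 1` together with the fixed-point hypothesis for `Pₖ₊₁` and `Pₖ`, gives
`Pₖ(x) = (x − βₖ) Pₖ₋₁(x) − γₖ ∫ ΔPₖ₋₁(x, y) dμ(y)`.
For `k = 1` the integral is `∫ Δ1 = 0`, and comparison with `P₁ = X − β₀` gives `β₁ = β₀`. For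
`k ≥ 2` the integral is `Pₖ₋₂(x)`, so subtracting the recurrence for `Pₖ` leaves
`(βₖ − βₖ₋₁) Pₖ₋₁ + (γₖ − γₖ₋₁) Pₖ₋₂ = 0`, whose coefficients vanish since the degrees differ.
-/

namespace Polynomial

variable {R : Type*} [CommRing R]

/-- The slice `y ↦ ΔQ(x, y)` of the two-variable divided difference. -/
noncomputable def divDiff (Q : R[X]) (x : R) : R[X] :=
  (Q - C (Q.eval x)) /ₘ (X - C x)

theorem X_sub_C_mul_divDiff (Q : R[X]) (x : R) :
    (X - C x) * divDiff Q x = Q - C (Q.eval x) :=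
  mul_divByMonic_eq_iff_isRoot.mpr (by simp)

theorem eq_divDiff_of_X_sub_C_mul_eq {Q D : R[X]} {x : R}
    (h : (X - C x) * D = Q - C (Q.eval x)) : D = divDiff Q x :=
  (monic_X_sub_C x).isRegular.left (h.trans (X_sub_C_mul_divDiff Q x).symm)

theorem divDiff_one (x : R) : divDiff 1 x = 0 := by
  simp [divDiff]

theorem exists_X_sub_X_mul_eq {σ : Type*} (Q : R[X]) (i j : σ) :
    ∃ D : MvPolynomial σ R, (MvPolynomial.X i - MvPolynomial.X j) * D =
      aeval (MvPolynomial.X i) Q - aeval (MvPolynomial.X j) Q := by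
  simpa only [eval_map_algebraMap, dvd_def, eq_comm] using sub_dvd_eval_sub
    (MvPolynomial.X i) (MvPolynomial.X j) (Q.map (algebraMap R (MvPolynomial σ R)))

theorem eval_aeval_vecCons_C_X (x y : R) (D : MvPolynomial (Fin 2) R) :
    (MvPolynomial.aeval ![C x, X] D).eval y = MvPolynomial.eval ![x, y] D := by
  induction D using MvPolynomial.induction_on with
  | C a => simp
  | add p q hp hq => simp [hp, hq]
  | mul_X p i hp => fin_cases i <;> simp [hp]

theorem eval_eq_eval_divDiff {Q : R[X]} {D : MvPolynomial (Fin 2) R}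
    (hD : (MvPolynomial.X 0 - MvPolynomial.X 1) * D =
      aeval (MvPolynomial.X 0) Q - aeval (MvPolynomial.X 1) Q) (x y : R) :
    MvPolynomial.eval ![x, y] D = (divDiff Q x).eval y := by
  have hslice := congrArg (MvPolynomial.aeval ![C x, X]) hD
  simp only [map_mul, map_sub, MvPolynomial.aeval_X, ← aeval_algHom_apply] at hslice
  simp only [Fin.isValue, Matrix.cons_val_zero, Matrix.cons_val_one, Matrix.cons_val_fin_one,
    aeval_X_left_apply, ← algebraMap_eq, aeval_algebraMap_apply, coe_aeval_eq_eval] at hslice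
  rw [← eq_divDiff_of_X_sub_C_mul_eq (D := MvPolynomial.aeval ![C x, X] D)
    (by linear_combination -hslice), eval_aeval_vecCons_C_X]

theorem divDiff_of_recurrence {Q Q' S : R[X]} {b g : R} (h : X * Q = S + C b * Q + C g * Q')
    (x : R) : divDiff S x = Q + C (x - b) * divDiff Q x - C g * divDiff Q' x := by
  symm
  apply eq_divDiff_of_X_sub_C_mul_eq
  have hx := congrArg (C ∘ eval x) h
  simp only [Function.comp, eval_mul, eval_add, eval_X, eval_C, map_add, map_mul] at hx
  rw [C_sub]
  linear_combination h - hx + (C x - C b) * X_sub_C_mul_divDiff Q x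
    - C g * X_sub_C_mul_divDiff Q' x

theorem eq_zero_of_C_mul_add_C_mul_eq_zero {R : Type*} [Semiring R] [NoZeroDivisors R]
    {p q : R[X]} {a b : R} (hq : q ≠ 0) (hpq : q.natDegree < p.natDegree)
    (h : C a * p + C b * q = 0) : a = 0 ∧ b = 0 := by
  have hp : p ≠ 0 := by rintro rfl; simp at hpq
  have ha : a = 0 := by
    have := congrArg (coeff · p.natDegree) h
    simpa [coeff_eq_zero_of_natDegree_lt hpq, hp] using this
  subst ha
  simpa [hq] using h

end Polynomial

section Integral

variable {μ : Measure ℝ}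

theorem integrable_eval (hμ : ∀ n : ℕ, Integrable (fun x => x ^ n) μ) (Q : ℝ[X]) :
    Integrable (fun y => Q.eval y) μ := by
  induction Q using Polynomial.induction_on' with
  | add p q hp hq => simp only [eval_add]; exact hp.add hq
  | monomial n a => simpa using (hμ n).const_mul a

theorem integral_eval_divDiff_of_recurrence (hμ : ∀ n : ℕ, Integrable (fun x => x ^ n) μ)
    {Q Q' S : ℝ[X]} {b g : ℝ} (h : X * Q = S + C b * Q + C g * Q') (x : ℝ) :
    ∫ y, (divDiff S x).eval y ∂μ = ∫ y, Q.eval y ∂μ +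
      (x - b) * ∫ y, (divDiff Q x).eval y ∂μ - g * ∫ y, (divDiff Q' x).eval y ∂μ := by
  simp only [divDiff_of_recurrence h, eval_sub, eval_add, eval_mul, eval_C]
  rw [integral_sub, integral_add, integral_const_mul, integral_const_mul]
  all_goals first
    | exact integrable_eval hμ _
    | exact (integrable_eval hμ _).const_mul _
    | exact (integrable_eval hμ _).add ((integrable_eval hμ _).const_mul _)

end Integral

def IsStrippingFixed (μ : Measure ℝ) (P : ℕ → ℝ[X]) : Prop :=
  ∀ n x, ∫ y, (divDiff (P (n + 1)) x).eval y ∂μ = (P n).eval x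

namespace IsMOPS

variable {μ : Measure ℝ} {P : ℕ → ℝ[X]} {β γ : ℕ → ℝ}

theorem integral_eval_eq_zero (hP : IsMOPS μ P β γ) {n : ℕ} (hn : n ≠ 0) :
    ∫ y, (P n).eval y ∂μ = 0 := by
  obtain ⟨hP0, -, -, -, -, horth⟩ := hP
  simpa [hP0] using horth n 0 hn

theorem recurrence_succ (hP : IsMOPS μ P β γ) (k : ℕ) :
    X * P (k + 1) = P (k + 2) + C (β (k + 1)) * P (k + 1) + C (γ (k + 1)) * P k :=
  hP.2.2.2.2.1 (k + 1) (Nat.le_add_left 1 k)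

theorem eval_succ_eq_integral_divDiff (hP : IsMOPS μ P β γ)
    (hμ : ∀ n : ℕ, Integrable (fun x => x ^ n) μ) (hS : IsStrippingFixed μ P) (k : ℕ) (x : ℝ) :
    (P (k + 1)).eval x =
      (x - β (k + 1)) * (P k).eval x - γ (k + 1) * ∫ y, (divDiff (P k) x).eval y ∂μ := by
  have h := integral_eval_divDiff_of_recurrence hμ (hP.recurrence_succ k) x
  rw [hS, hS, hP.integral_eval_eq_zero k.succ_ne_zero] at h
  linarith

theorem beta_one_eq_beta_zero (hP : IsMOPS μ P β γ)
    (hμ : ∀ n : ℕ, Integrable (fun x => x ^ n) μ) (hS : IsStrippingFixed μ P) : β 1 = β 0 := by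
  have h1 := hP.eval_succ_eq_integral_divDiff hμ hS 0 0
  obtain ⟨hP0, -, -, hrec0, -, -⟩ := hP
  have h0 := congrArg (eval 0) hrec0
  simp only [hP0, mul_one, eval_X, eval_add, eval_C, zero_add, zero_sub, eval_one, divDiff_one,
    eval_zero, integral_zero, mul_zero, sub_zero] at h0 h1
  linarith

theorem jacobi_succ_succ_eq (hP : IsMOPS μ P β γ)
    (hμ : ∀ n : ℕ, Integrable (fun x => x ^ n) μ) (hS : IsStrippingFixed μ P) (n : ℕ) :
    β (n + 2) = β (n + 1) ∧ γ (n + 2) = γ (n + 1) := by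
  have hdiff : C (β (n + 2) - β (n + 1)) * P (n + 1) + C (γ (n + 2) - γ (n + 1)) * P n = 0 := by
    refine Polynomial.funext fun x => ?_
    have h := hP.eval_succ_eq_integral_divDiff hμ hS (n + 1) x
    have h' := congrArg (eval x) (hP.recurrence_succ n)
    rw [hS] at h
    simp only [eval_mul, eval_add, eval_X, eval_C, eval_zero] at h' ⊢
    linarith
  obtain ⟨-, hmonic, hdeg, -, -, -⟩ := hP
  have hlt : (P n).natDegree < (P (n + 1)).natDegree := by
    rw [hdeg, hdeg]; exact n.lt_succ_self
  obtain ⟨hβ, hγ⟩ := eq_zero_of_C_mul_add_C_mul_eq_zero (hmonic n).ne_zero hlt hdiff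
  exact ⟨sub_eq_zero.mp hβ, sub_eq_zero.mp hγ⟩

end IsMOPS

theorem fixed_point_of_stripping_has_constant_jacobi_general (μ : Measure ℝ)
    (hμmom : ∀ n : ℕ, Integrable (fun x => x ^ n) μ)
    (P : ℕ → Polynomial ℝ) (β γ : ℕ → ℝ) (hP : IsMOPS μ P β γ)
    (h : ∀ n, 1 ≤ n → ∀ x : ℝ, ∀ D : MvPolynomial (Fin 2) ℝ,
      (MvPolynomial.X 0 - MvPolynomial.X 1) * D =
        Polynomial.aeval (MvPolynomial.X 0) (P n) - Polynomial.aeval (MvPolynomial.X 1) (P n) →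
      ∫ y, MvPolynomial.eval ![x, y] D ∂μ = (P (n - 1)).eval x) :
    (∀ n, β n = β 0) ∧ (∀ n, 1 ≤ n → γ n = γ 1) := by
  have hS : IsStrippingFixed μ P := by
    intro n x
    obtain ⟨D, hD⟩ := exists_X_sub_X_mul_eq (P (n + 1)) (0 : Fin 2) 1
    simp_rw [← eval_eq_eval_divDiff hD x]
    exact h (n + 1) (Nat.le_add_left 1 n) x D hD
  have hβ : ∀ n, β (n + 1) = β n
    | 0 => hP.beta_one_eq_beta_zero hμmom hS
    | n + 1 => (hP.jacobi_succ_succ_eq hμmom hS n).1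
  refine ⟨fun n => ?_, fun n hn => ?_⟩
  · induction n with
    | zero => rfl
    | succ n ih => exact (hβ n).trans ih
  · induction n, hn using Nat.le_induction with
    | base => rfl
    | succ n hn ih =>
      obtain ⟨m, rfl⟩ := Nat.exists_eq_add_of_le' hn
      exact ((hP.jacobi_succ_succ_eq hμmom hS m).2).trans ih

/-- if a probability measure `μ` with finite moments has a MOPS `(Pₙ)`
with Jacobi parameters `(β, γ)` such that `∫ ΔPₙ(x, y) dμ(y) = P_{n−1}(x)` for every
`n ≥ 1` and every `x` (with `ΔPₙ` the unique two-variable polynomial satisfying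
`Pₙ(x) − Pₙ(y) = (x − y)·ΔPₙ(x, y)`), then the Jacobi parameter sequences are constant:
`βₙ = β₀` for all `n` and `γₙ = γ₁` for all `n ≥ 1`. -/
theorem fixed_point_of_stripping_has_constant_jacobi (μ : Measure ℝ) [IsProbabilityMeasure μ]
    (hμmom : ∀ n : ℕ, Integrable (fun x => x ^ n) μ)
    (P : ℕ → Polynomial ℝ) (β γ : ℕ → ℝ) (hP : IsMOPS μ P β γ)
    (h : ∀ n, 1 ≤ n → ∀ x : ℝ, ∀ D : MvPolynomial (Fin 2) ℝ,
      (MvPolynomial.X 0 - MvPolynomial.X 1) * D =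
        Polynomial.aeval (MvPolynomial.X 0) (P n) - Polynomial.aeval (MvPolynomial.X 1) (P n) →
      ∫ y, MvPolynomial.eval ![x, y] D ∂μ = (P (n - 1)).eval x) :
    (∀ n, β n = β 0) ∧ (∀ n, 1 ≤ n → γ n = γ 1) :=
  fixed_point_of_stripping_has_constant_jacobi_general μ hμmom P β γ hP h
end
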